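/- arXiv:1706.07703 — 5 statements merged into one kernel-verified Lean document; each statement's English description precedes it below -/
import Mathlib

section
/- Let a > -1 and M ∈ ℂ with Re M > 0. Then there exists a constant C > 0, depending only on M and a, such that for all t > 0: ∫₀¹ φ(t)^a s^a |K₁(φ(t)s, t; M)| φ(t) ds ≤ C e^{-a t} (e^t - 1)^{a+1} (e^t + 1)^{Re M - 1}. -/
open MeasureTheory

/-- The Gauss hypergeometric function `F(a,b;c;x)` as a sum of the hypergeometric series. -/
noncomputable def GaussF (a b c x : ℂ) : ℂ :=
  ∑' n : ℕ, (ascPochhammer ℂ n).eval a * (ascPochhammer ℂ n).eval b /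
    ((ascPochhammer ℂ n).eval c * (n.factorial : ℂ)) * x ^ n

/-- The kernel `K₁(z,t;M)`. -/
noncomputable def K1 (z t : ℝ) (M : ℂ) : ℂ :=
  (4 : ℂ) ^ (-M) * Complex.exp (M * (t : ℂ)) *
    (((1 + Real.exp (-t)) ^ 2 - z ^ 2 : ℝ) : ℂ) ^ (-(1/2 : ℂ) + M) *
    GaussF (1/2 - M) (1/2 - M) 1
      ((((1 - Real.exp (-t)) ^ 2 - z ^ 2) / ((1 + Real.exp (-t)) ^ 2 - z ^ 2) : ℝ) : ℂ)

/-!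
Write `e = e^{-t}` and `w = (1 + e)² - ((1 - e) s)²`. For `s ∈ (0,1)` we have `1 - s ≤ w ≤ 4`, and
the argument of `F` lies in `[0,1]`. With `p = 1/2 - M`, a Raabe-type comparison shows that
`|(p)_n / n!|² = O(n^{-1-Re M})`, so the series for `F` converges absolutely on the closed unit disc
and `F` is bounded there. Hence `|K₁| ≲ e^{t Re M} (1 - s)^{min(Re M - 1/2, 0)}`, and the
`s`-integral is a convergent Beta integral. What remains is
`(1 - e^{-t})^{a+1} e^{t Re M} = e^{-at} (e^t - 1)^{a+1} (e^t)^{Re M - 1}` together with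
`e^t ≤ e^t + 1 ≤ 2 e^t`.
-/

open Real Filter
open scoped Nat

theorem summable_of_eventually_mul_rpow_le {c : ℕ → ℝ} (hc : ∀ n, 0 ≤ c n) {r : ℝ} (hr : 1 < r)
    (h : ∀ᶠ n : ℕ in atTop, c (n + 1) * ((n : ℝ) + 2) ^ r ≤ c n * ((n : ℝ) + 1) ^ r) :
    Summable c := by
  obtain ⟨N, hN⟩ := eventually_atTop.1 h
  have hdecr : ∀ n ≥ N, c n * ((n : ℝ) + 1) ^ r ≤ c N * ((N : ℝ) + 1) ^ r := by
    intro n hn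
    induction n, hn using Nat.le_induction with
    | base => exact le_rfl
    | succ n hn ih =>
      have hstep := hN n hn
      push_cast
      rw [add_assoc, one_add_one_eq_two]
      linarith
  refine .of_norm_bounded_eventually_nat
    (((summable_one_div_nat_add_rpow 1 r).2 hr).mul_left (c N * ((N : ℝ) + 1) ^ r)) ?_
  filter_upwards [eventually_ge_atTop N] with n hn
  have hpos : 0 < ((n : ℝ) + 1) ^ r := by positivity
  rw [norm_of_nonneg (hc n), abs_of_pos (by positivity), mul_one_div, le_div_iff₀ hpos]
  exact hdecr n hn

theorem add_one_rpow_mul_one_sub_le_rpow {x r : ℝ} (hx : 0 ≤ x) (hr : 1 ≤ r) :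
    (x + 1) ^ r * (1 - r / (x + 1)) ≤ x ^ r := by
  have hx1 : 0 < x + 1 := by linarith
  have hs : -1 ≤ -1 / (x + 1) := by rw [le_div_iff₀ hx1]; linarith
  have bernoulli := one_add_mul_self_le_rpow_one_add hs hr
  rw [show 1 + -1 / (x + 1) = x / (x + 1) by field_simp; ring, div_rpow hx hx1.le,
    le_div_iff₀ (by positivity)] at bernoulli
  calc (x + 1) ^ r * (1 - r / (x + 1)) = (1 + r * (-1 / (x + 1))) * (x + 1) ^ r := by ring
    _ ≤ x ^ r := bernoulli

/-- The exponent `3/2 - Re p` is chosen strictly between `1` and `2 (1 - Re p)`, the coefficient in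
`‖p + n‖² / (n + 1)² = 1 - 2 (1 - Re p) / (n + 1) + O(n⁻²)`. -/
theorem eventually_norm_add_natCast_sq_mul_rpow_le {p : ℂ} (hp : p.re < 1 / 2) :
    ∀ᶠ n : ℕ in atTop, ‖p + n‖ ^ 2 * ((n : ℝ) + 2) ^ (3 / 2 - p.re) ≤
      ((n : ℝ) + 1) ^ 2 * ((n : ℝ) + 1) ^ (3 / 2 - p.re) := by
  set σ := p.re
  set r := 3 / 2 - σ with hr
  have hgap : 0 < 1 / 2 - σ := by linarith
  filter_upwards [tendsto_natCast_atTop_atTop.eventually_ge_atTop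
    ((σ ^ 2 - σ + 1 / 2 + p.im ^ 2) / (1 / 2 - σ))] with n hn
  rw [div_le_iff₀ hgap] at hn
  have hn2 : (0 : ℝ) < (n : ℝ) + 2 := by positivity
  have hnorm : ‖p + n‖ ^ 2 = (σ + n) ^ 2 + p.im ^ 2 := by
    rw [Complex.sq_norm, Complex.normSq_apply]
    simp only [Complex.add_re, Complex.natCast_re, Complex.add_im, Complex.natCast_im, add_zero]
    ring
  have hquad : ‖p + n‖ ^ 2 ≤ ((n : ℝ) + 1) ^ 2 * (1 - r / ((n : ℝ) + 2)) :=
    calc ‖p + n‖ ^ 2 ≤ ((n : ℝ) + 1) ^ 2 - r * ((n : ℝ) + 1) := by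
          rw [hnorm]; linear_combination hn
      _ ≤ ((n : ℝ) + 1) ^ 2 * (1 - r / ((n : ℝ) + 2)) := by
          rw [mul_one_sub, mul_div_assoc', sub_le_sub_iff_left, div_le_iff₀ hn2]
          nlinarith
  have hbern : ((n : ℝ) + 2) ^ r * (1 - r / ((n : ℝ) + 2)) ≤ ((n : ℝ) + 1) ^ r := by
    have := add_one_rpow_mul_one_sub_le_rpow (x := (n : ℝ) + 1) (r := r) (by positivity)
      (by linarith)
    rwa [add_assoc, one_add_one_eq_two] at this
  calc ‖p + n‖ ^ 2 * ((n : ℝ) + 2) ^ r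
      ≤ ((n : ℝ) + 1) ^ 2 * (1 - r / ((n : ℝ) + 2)) * ((n : ℝ) + 2) ^ r := by gcongr
    _ = ((n : ℝ) + 1) ^ 2 * (((n : ℝ) + 2) ^ r * (1 - r / ((n : ℝ) + 2))) := by ring
    _ ≤ ((n : ℝ) + 1) ^ 2 * ((n : ℝ) + 1) ^ r := by gcongr

theorem summable_norm_ascPochhammer_eval_div_factorial_sq {p : ℂ} (hp : p.re < 1 / 2) :
    Summable fun n : ℕ => (‖(ascPochhammer ℂ n).eval p‖ / n !) ^ 2 := by
  refine summable_of_eventually_mul_rpow_le (fun n => by positivity)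
    (by linarith : 1 < 3 / 2 - p.re) ?_
  filter_upwards [eventually_norm_add_natCast_sq_mul_rpow_le hp] with n hn
  have hratio : (‖(ascPochhammer ℂ (n + 1)).eval p‖ / (n + 1)!) ^ 2 =
      (‖(ascPochhammer ℂ n).eval p‖ / n !) ^ 2 * (‖p + n‖ ^ 2 / ((n : ℝ) + 1) ^ 2) := by
    rw [ascPochhammer_succ_eval, norm_mul, Nat.factorial_succ]
    push_cast
    field_simp
  rw [hratio, mul_assoc]
  gcongr
  rw [div_mul_eq_mul_div, div_le_iff₀ (by positivity)]
  linarith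

theorem norm_gaussF_le {p x : ℂ} (hp : p.re < 1 / 2) (hx : ‖x‖ ≤ 1) :
    ‖GaussF p p 1 x‖ ≤ ∑' n : ℕ, (‖(ascPochhammer ℂ n).eval p‖ / n !) ^ 2 := by
  refine tsum_of_norm_bounded (summable_norm_ascPochhammer_eval_div_factorial_sq hp).hasSum
    fun n => ?_
  rw [ascPochhammer_eval_one, norm_mul, norm_pow, norm_div, norm_mul, norm_mul]
  simp only [Complex.norm_natCast]
  exact (mul_le_of_le_one_right (by positivity) (pow_le_one₀ (norm_nonneg x) hx)).trans_eq
    (by ring)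

theorem integrableOn_rpow_mul_one_sub_rpow {a b : ℝ} (ha : -1 < a) (hb : -1 < b) :
    IntegrableOn (fun s : ℝ => s ^ a * (1 - s) ^ b) (Set.Ioo 0 1) := by
  have hbeta := (Complex.betaIntegral_convergent (u := ((a + 1 : ℝ) : ℂ)) (v := ((b + 1 : ℝ) : ℂ))
    (by simpa using by linarith) (by simpa using by linarith)).norm
  rw [intervalIntegrable_iff_integrableOn_Ioo_of_le zero_le_one] at hbeta
  refine hbeta.congr_fun (fun s ⟨hs0, hs1⟩ => ?_) measurableSet_Ioo
  have hcast : (1 : ℂ) - (s : ℝ) = ((1 - s : ℝ) : ℂ) := by push_cast; ring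
  simp only [Complex.ofReal_add, Complex.ofReal_one, add_sub_cancel_right, hcast, norm_mul,
    Complex.norm_cpow_eq_rpow_re_of_pos hs0, Complex.norm_cpow_eq_rpow_re_of_pos (sub_pos.2 hs1),
    Complex.ofReal_re]

theorem rpow_le_rpow_max_mul_rpow_min {u w B : ℝ} (hu : 0 < u) (huw : u ≤ w) (hwB : w ≤ B)
    (r : ℝ) : w ^ r ≤ B ^ max r 0 * u ^ min r 0 := by
  have hw : 0 < w := hu.trans_le huw
  calc w ^ r = w ^ max r 0 * w ^ min r 0 := by rw [← rpow_add hw, max_add_min, add_zero]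
    _ ≤ B ^ max r 0 * u ^ min r 0 :=
      mul_le_mul (rpow_le_rpow hw.le hwB (le_max_right r 0))
        (rpow_le_rpow_of_nonpos hu huw (min_le_right r 0)) (by positivity)
        (rpow_nonneg (hw.le.trans hwB) _)

theorem rpow_le_max_one_mul_add_one_rpow {x : ℝ} (hx : 1 ≤ x) (r : ℝ) :
    x ^ r ≤ max 1 (2 ^ (-r)) * (x + 1) ^ r := by
  rcases le_total 0 r with hr | hr
  · calc x ^ r ≤ 1 * (x + 1) ^ r := by rw [one_mul]; gcongr; linarith
      _ ≤ max 1 (2 ^ (-r)) * (x + 1) ^ r := by gcongr; exact le_max_left _ _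
  · calc x ^ r = 2 ^ (-r) * (2 * x) ^ r := by
          rw [mul_rpow zero_le_two (by linarith), ← mul_assoc, ← rpow_add zero_lt_two,
            neg_add_cancel, rpow_zero, one_mul]
      _ ≤ max 1 (2 ^ (-r)) * (x + 1) ^ r :=
          mul_le_mul (le_max_right _ _) (rpow_le_rpow_of_nonpos (by linarith) (by linarith) hr)
            (by positivity) (by positivity)

theorem one_sub_exp_neg_rpow_mul_exp {t : ℝ} (ht : 0 ≤ t) (a ε : ℝ) :
    (1 - exp (-t)) ^ (a + 1) * exp (ε * t) =
      exp (-a * t) * (exp t - 1) ^ (a + 1) * exp t ^ (ε - 1) := by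
  have hfactor : 1 - exp (-t) = exp (-t) * (exp t - 1) := by
    rw [mul_sub, ← exp_add, neg_add_cancel, exp_zero, mul_one]
  rw [hfactor, mul_rpow (exp_pos _).le (by linarith [add_one_le_exp t]), ← exp_mul, ← exp_mul]
  have : exp (-t * (a + 1)) * exp (ε * t) = exp (-a * t) * exp (t * (ε - 1)) := by
    rw [← exp_add, ← exp_add]; ring_nf
  linear_combination (exp t - 1) ^ (a + 1) * this

theorem norm_K1_le {t s : ℝ} (ht : 0 ≤ t) (hs0 : 0 ≤ s) (hs1 : s < 1) {M : ℂ} (hM : 0 < M.re) :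
    ‖K1 ((1 - exp (-t)) * s) t M‖ ≤
      4 ^ (-M.re) * exp (M.re * t) *
        (4 ^ max (M.re - 1 / 2) 0 * (1 - s) ^ min (M.re - 1 / 2) 0) *
        ∑' n : ℕ, (‖(ascPochhammer ℂ n).eval (1 / 2 - M)‖ / n !) ^ 2 := by
  set e := exp (-t)
  have he0 : 0 < e := exp_pos _
  have he1 : e ≤ 1 := exp_le_one_iff.2 (by linarith)
  set w := (1 + e) ^ 2 - ((1 - e) * s) ^ 2
  have hsq : ((1 - e) * s) ^ 2 ≤ s := by
    calc ((1 - e) * s) ^ 2 ≤ (1 * s) ^ 2 := by gcongr; nlinarith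
      _ ≤ s := by nlinarith
  have hw_lower : 1 - s ≤ w := by nlinarith
  have hw_upper : w ≤ 4 := by nlinarith
  have hw : 0 < w := by linarith
  have hnum : 0 ≤ (1 - e) ^ 2 - ((1 - e) * s) ^ 2 := by
    rw [mul_pow, ← mul_one_sub]; exact mul_nonneg (sq_nonneg _) (by nlinarith)
  have harg : ‖((((1 - e) ^ 2 - ((1 - e) * s) ^ 2) / w : ℝ) : ℂ)‖ ≤ 1 := by
    rw [Complex.norm_real, norm_of_nonneg (div_nonneg hnum hw.le), div_le_one hw]
    nlinarith
  have hp : (1 / 2 - M).re < 1 / 2 := by simpa using hM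
  have h4 : ‖(4 : ℂ) ^ (-M)‖ = 4 ^ (-M.re) := by
    simpa using Complex.norm_cpow_eq_rpow_re_of_pos (by norm_num : (0 : ℝ) < 4) (-M)
  have hexp : ‖Complex.exp (M * t)‖ = exp (M.re * t) := by simp [Complex.norm_exp]
  have hpow : ‖(w : ℂ) ^ (-(1 / 2 : ℂ) + M)‖ = w ^ (M.re - 1 / 2) := by
    rw [Complex.norm_cpow_eq_rpow_re_of_pos hw]
    simp only [one_div, Complex.add_re, Complex.neg_re, Complex.inv_re, Complex.re_ofNat,
      Complex.normSq_ofNat, div_self_mul_self']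
    ring_nf
  rw [K1, norm_mul, norm_mul, norm_mul, h4, hexp, hpow]
  gcongr
  · exact rpow_le_rpow_max_mul_rpow_min (by linarith) hw_lower hw_upper _
  · exact norm_gaussF_le hp harg

theorem exists_setIntegral_K1_le {a : ℝ} (ha : -1 < a) {M : ℂ} (hM : 0 < M.re) :
    ∃ K ≥ 0, ∀ t ≥ 0,
      ∫ s in Set.Ioo (0 : ℝ) 1,
          (1 - exp (-t)) ^ a * s ^ a * ‖K1 ((1 - exp (-t)) * s) t M‖ * (1 - exp (-t)) ≤
        K * ((1 - exp (-t)) ^ (a + 1) * exp (M.re * t)) := by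
  set μ := min (M.re - 1 / 2) 0
  set Cf := ∑' n : ℕ, (‖(ascPochhammer ℂ n).eval (1 / 2 - M)‖ / n !) ^ 2
  set L := 4 ^ (-M.re) * 4 ^ max (M.re - 1 / 2) 0 * Cf
  have hL : 0 ≤ L := by positivity
  have hbeta := integrableOn_rpow_mul_one_sub_rpow ha (b := μ) (lt_min (by linarith) (by norm_num))
  refine ⟨L * ∫ s in Set.Ioo (0 : ℝ) 1, s ^ a * (1 - s) ^ μ,
    mul_nonneg hL (setIntegral_nonneg measurableSet_Ioo fun s hs => ?_), fun t ht => ?_⟩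
  · exact mul_nonneg (rpow_nonneg hs.1.le a) (rpow_nonneg (by linarith [hs.2]) μ)
  set x := 1 - exp (-t)
  have hx : 0 ≤ x := by simp only [x, sub_nonneg, exp_le_one_iff]; linarith
  have hpointwise : ∀ s ∈ Set.Ioo (0 : ℝ) 1, x ^ a * s ^ a * ‖K1 (x * s) t M‖ * x ≤
      L * (x ^ (a + 1) * exp (M.re * t)) * (s ^ a * (1 - s) ^ μ) := by
    intro s ⟨hs0, hs1⟩
    rw [rpow_add_one' hx (by linarith)]
    calc x ^ a * s ^ a * ‖K1 (x * s) t M‖ * x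
        ≤ x ^ a * s ^ a * (4 ^ (-M.re) * exp (M.re * t) *
            (4 ^ max (M.re - 1 / 2) 0 * (1 - s) ^ μ) * Cf) * x := by
          gcongr; exact norm_K1_le ht hs0.le hs1 hM
      _ = L * (x ^ a * x * exp (M.re * t)) * (s ^ a * (1 - s) ^ μ) := by ring
  have hnonneg : ∀ s ∈ Set.Ioo (0 : ℝ) 1, 0 ≤ x ^ a * s ^ a * ‖K1 (x * s) t M‖ * x :=
    fun s hs => by have := hs.1.le; positivity
  calc _ ≤ ∫ s in Set.Ioo (0 : ℝ) 1, L * (x ^ (a + 1) * exp (M.re * t)) * (s ^ a * (1 - s) ^ μ) :=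
        integral_mono_of_nonneg (ae_restrict_of_forall_mem measurableSet_Ioo hnonneg)
          (hbeta.const_mul _) (ae_restrict_of_forall_mem measurableSet_Ioo hpointwise)
    _ = _ := by rw [integral_const_mul]; ring

theorem stmt0 (a : ℝ) (ha : a > -1) (M : ℂ) (hM : 0 < M.re) :
    ∃ C > 0, ∀ t : ℝ, 0 < t →
      (∫ s in Set.Ioo (0:ℝ) 1,
          (1 - Real.exp (-t)) ^ a * s ^ a *
            ‖K1 ((1 - Real.exp (-t)) * s) t M‖ * (1 - Real.exp (-t)))
        ≤ C * Real.exp (-a * t) * (Real.exp t - 1) ^ (a + 1) *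
            (Real.exp t + 1) ^ (M.re - 1) := by
  obtain ⟨K, hK, hbound⟩ := exists_setIntegral_K1_le ha hM
  refine ⟨(K + 1) * max 1 (2 ^ (-(M.re - 1))), by positivity, fun t ht => ?_⟩
  have hexp : 0 ≤ exp t - 1 := by linarith [add_one_le_exp t]
  calc _ ≤ K * ((1 - exp (-t)) ^ (a + 1) * exp (M.re * t)) := hbound t ht.le
    _ ≤ (K + 1) * (exp (-a * t) * (exp t - 1) ^ (a + 1) * exp t ^ (M.re - 1)) := by
        rw [one_sub_exp_neg_rpow_mul_exp ht.le]; gcongr; linarith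
    _ ≤ (K + 1) * (exp (-a * t) * (exp t - 1) ^ (a + 1) *
          (max 1 (2 ^ (-(M.re - 1))) * (exp t + 1) ^ (M.re - 1))) := by
        gcongr; exact rpow_le_max_one_mul_add_one_rpow (one_le_exp ht.le) _
    _ = _ := by ring
end

section
/- Let a > -1 and M ∈ ℂ with Re M > 0 and Re M ≠ 1/2. Then there exists a constant C > 0, depending only on M and a, such that for all z > 1, writing ξ(y) = ((z−1)² − y²)/((z+1)² − y²): ∫₀^{z−1} y^a ((z+1)² − y²)^{Re M} · (((z−1)² − y²) · √((z+1)² − y²))^{−1} · | (z − z² + M(1 − z² − y²)) F(1/2−M, 1/2−M; 1; ξ(y)) + (z² − 1 + y²)(1/2 + M) F(−1/2−M, 1/2−M; 1; ξ(y)) | dy ≤ C (z−1)^{1+a} (z+1)^{Re M − 1/2} if Re M < 1/2, and ≤ C (z−1)^{1+a} (z+1)^{2 Re M − 1} if Re M > 1/2. -/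
/-!
Put `α = 1/2 - M`, `u = (z-1)² - y²`, `v = (z+1)² - y²` and `F₁ = F(α, α; 1; u/v)`,
`F₂ = F(α - 1, α; 1; u/v)`. The combination under the norm rearranges to
`(z² - z)(1 + 2M)(F₂ - F₁) + u (M F₁ - (1/2 + M) F₂)`.
Since `‖(α)ₙ‖ ≤ C n! (n+1)^(Re α - 1)` and `2 Re α = 1 - 2 Re M < 1`, both series converge
absolutely on the closed unit disc, and `F₂ - F₁` vanishes to first order in `u/v`; so the
integrand is at most `K y^a ((z² - z) v^(p-1) + v^p)` with `p = Re M - 1/2`.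
For `0 < y < z - 1` we have `z + 1 ≤ v ≤ (z+1)²`, which handles `v^p`. For `v^(p-1)`, split at
`y = (z-1)/2`: below it `z + 1 - y ≍ z + 1`, above it `y ≍ z - 1` and
`∫ (z + 1 - y)^(p-1) dy ≤ ((z+1)^p + 2^p)/|p|`. Altogether the integral is
`O((z-1)^(1+a) (P + P²))` with `P = (z+1)^p`, and `P + P² ≤ 2P` or `2P²` according to the
sign of `p`.
-/

open MeasureTheory

open Finset Real Set
open scoped Nat

lemma ascPochhammer_eval_eq_prod (α : ℂ) (n : ℕ) :
    (ascPochhammer ℂ n).eval α = ∏ i ∈ range n, (α + i) := by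
  induction n with
  | zero => simp
  | succ n ih => rw [ascPochhammer_succ_eval, ih, prod_range_succ]

lemma norm_one_add_le_exp (w : ℂ) : ‖1 + w‖ ≤ exp (w.re + ‖w‖ ^ 2) := by
  have hsq : ‖1 + w‖ ^ 2 = 1 + (2 * w.re + ‖w‖ ^ 2) := by
    rw [Complex.sq_norm, Complex.sq_norm, Complex.normSq_apply, Complex.normSq_apply]
    simp only [Complex.add_re, Complex.add_im, Complex.one_re, Complex.one_im]
    ring
  refine (pow_le_pow_iff_left₀ (norm_nonneg _) (exp_pos _).le two_ne_zero).mp ?_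
  calc ‖1 + w‖ ^ 2 ≤ exp (2 * w.re + ‖w‖ ^ 2) := by
        rw [hsq]; linarith [add_one_le_exp (2 * w.re + ‖w‖ ^ 2)]
    _ ≤ exp (w.re + ‖w‖ ^ 2) ^ 2 := by
      rw [← exp_nat_mul]; gcongr; push_cast; nlinarith [sq_nonneg ‖w‖]

lemma norm_add_natCast_le (α : ℂ) (i : ℕ) :
    ‖α + i‖ ≤ (i + 1) * exp ((α.re - 1) / (i + 1) + ‖α - 1‖ ^ 2 / ((i : ℝ) + 1) ^ 2) := by
  have hi : (0 : ℝ) < i + 1 := by positivity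
  have hfac : α + i = ((i + 1 : ℝ) : ℂ) * (1 + (α - 1) / ((i + 1 : ℝ) : ℂ)) := by
    field_simp; push_cast; ring
  rw [hfac, norm_mul, Complex.norm_real, norm_of_nonneg hi.le]
  refine mul_le_mul_of_nonneg_left ((norm_one_add_le_exp _).trans_eq ?_) hi.le
  rw [Complex.div_ofReal_re, norm_div, Complex.norm_real, norm_of_nonneg hi.le, div_pow]
  simp

lemma mul_harmonic_le (c : ℝ) (n : ℕ) : c * harmonic n ≤ c * log (n + 1) + |c| := by
  have h1 := log_add_one_le_harmonic n
  have h2 := harmonic_le_one_add_log n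
  have h3 : log n ≤ log (n + 1) := by
    rcases n.eq_zero_or_pos with rfl | hn
    · simp
    · exact log_le_log (by positivity) (by linarith)
  push_cast at h1
  have habs : |(harmonic n : ℝ) - log (n + 1)| ≤ 1 := abs_le.mpr ⟨by linarith, by linarith⟩
  have := mul_le_mul_of_nonneg_left habs (abs_nonneg c)
  rw [← abs_mul] at this
  linarith [le_abs_self (c * ((harmonic n : ℝ) - log (n + 1)))]

lemma summable_one_div_add_one_sq : Summable fun i : ℕ => 1 / ((i : ℝ) + 1) ^ 2 := by
  simpa using (summable_nat_add_iff 1).mpr (Real.summable_one_div_nat_pow.mpr one_lt_two)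

lemma exists_norm_ascPochhammer_le (α : ℂ) :
    ∃ C, ∀ n : ℕ, ‖(ascPochhammer ℂ n).eval α‖ ≤ C * n ! * ((n : ℝ) + 1) ^ (α.re - 1) := by
  set Q := ∑' i : ℕ, 1 / ((i : ℝ) + 1) ^ 2
  refine ⟨exp (|α.re - 1| + ‖α - 1‖ ^ 2 * Q), fun n => ?_⟩
  have hsum : ∑ i ∈ range n, ((α.re - 1) / (i + 1) + ‖α - 1‖ ^ 2 / ((i : ℝ) + 1) ^ 2)
      ≤ (α.re - 1) * log (n + 1) + (|α.re - 1| + ‖α - 1‖ ^ 2 * Q) := by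
    have hQ : ∑ i ∈ range n, 1 / ((i : ℝ) + 1) ^ 2 ≤ Q :=
      summable_one_div_add_one_sq.sum_le_tsum _ (fun i _ => by positivity)
    have hH : (harmonic n : ℝ) = ∑ i ∈ range n, 1 / ((i : ℝ) + 1) := by
      simp [harmonic]
    have := mul_harmonic_le (α.re - 1) n
    rw [hH] at this
    rw [sum_add_distrib]
    simp only [div_eq_mul_one_div (‖α - 1‖ ^ 2), ← mul_sum, div_eq_mul_one_div (α.re - 1)]
    nlinarith [mul_le_mul_of_nonneg_left hQ (sq_nonneg ‖α - 1‖)]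
  rw [ascPochhammer_eval_eq_prod, norm_prod]
  calc ∏ i ∈ range n, ‖α + i‖
      ≤ ∏ i ∈ range n, ((i + 1) * exp ((α.re - 1) / (i + 1) + ‖α - 1‖ ^ 2 / ((i : ℝ) + 1) ^ 2)) :=
        prod_le_prod (fun _ _ => norm_nonneg _) (fun i _ => norm_add_natCast_le α i)
    _ = n ! * exp (∑ i ∈ range n, ((α.re - 1) / (i + 1) + ‖α - 1‖ ^ 2 / ((i : ℝ) + 1) ^ 2)) := by
      rw [prod_mul_distrib, exp_sum]
      congr 1
      exact_mod_cast prod_range_add_one_eq_factorial n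
    _ ≤ n ! * exp ((α.re - 1) * log (n + 1) + (|α.re - 1| + ‖α - 1‖ ^ 2 * Q)) := by gcongr
    _ = _ := by
      rw [exp_add, rpow_def_of_pos (by positivity), mul_comm (log _)]; ring

lemma summable_nat_add_one_rpow {s : ℝ} (hs : s < -1) :
    Summable fun n : ℕ => ((n : ℝ) + 1) ^ s := by
  simpa using (summable_nat_add_iff 1).mpr (Real.summable_nat_rpow.mpr hs)

noncomputable def gaussCoeff (a b c : ℂ) (n : ℕ) : ℂ :=
  (ascPochhammer ℂ n).eval a * (ascPochhammer ℂ n).eval b / ((ascPochhammer ℂ n).eval c * n !)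

lemma gaussF_eq_tsum (a b c x : ℂ) : GaussF a b c x = ∑' n, gaussCoeff a b c n * x ^ n := rfl

lemma norm_gaussCoeff_one (a b : ℂ) (n : ℕ) :
    ‖gaussCoeff a b 1 n‖ =
      ‖(ascPochhammer ℂ n).eval a‖ * ‖(ascPochhammer ℂ n).eval b‖ / (n ! : ℝ) ^ 2 := by
  rw [gaussCoeff, ascPochhammer_eval_one, norm_div, norm_mul, norm_mul, Complex.norm_natCast, sq]

lemma summable_norm_gaussCoeff_one {a b : ℂ} (h : a.re + b.re < 1) :
    Summable fun n => ‖gaussCoeff a b 1 n‖ := by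
  obtain ⟨Ca, hCa⟩ := exists_norm_ascPochhammer_le a
  obtain ⟨Cb, hCb⟩ := exists_norm_ascPochhammer_le b
  refine Summable.of_nonneg_of_le (fun _ => norm_nonneg _) (fun n => ?_)
    ((summable_nat_add_one_rpow (s := a.re + b.re - 2) (by linarith)).mul_left (Ca * Cb))
  have hn : (0 : ℝ) < n ! := by positivity
  rw [norm_gaussCoeff_one, div_le_iff₀ (by positivity)]
  calc ‖(ascPochhammer ℂ n).eval a‖ * ‖(ascPochhammer ℂ n).eval b‖
      ≤ (Ca * n ! * ((n : ℝ) + 1) ^ (a.re - 1)) * (Cb * n ! * ((n : ℝ) + 1) ^ (b.re - 1)) :=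
        mul_le_mul (hCa n) (hCb n) (norm_nonneg _) ((norm_nonneg _).trans (hCa n))
    _ = Ca * Cb * ((n : ℝ) + 1) ^ (a.re + b.re - 2) * (n ! : ℝ) ^ 2 := by
      rw [show a.re + b.re - 2 = (a.re - 1) + (b.re - 1) by ring, rpow_add (by positivity)]
      ring

lemma norm_gaussF_one_le {a b : ℂ} (h : a.re + b.re < 1) {x : ℂ} (hx : ‖x‖ ≤ 1) :
    ‖GaussF a b 1 x‖ ≤ ∑' n, ‖gaussCoeff a b 1 n‖ :=
  tsum_of_norm_bounded (summable_norm_gaussCoeff_one h).hasSum fun n => by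
    rw [norm_mul, norm_pow]
    exact mul_le_of_le_one_right (norm_nonneg _) (pow_le_one₀ (norm_nonneg _) hx)

lemma summable_gaussCoeff_one_mul_pow {a b : ℂ} (h : a.re + b.re < 1) {x : ℂ} (hx : ‖x‖ ≤ 1) :
    Summable fun n => gaussCoeff a b 1 n * x ^ n :=
  Summable.of_norm_bounded (summable_norm_gaussCoeff_one h) fun n => by
    rw [norm_mul, norm_pow]
    exact mul_le_of_le_one_right (norm_nonneg _) (pow_le_one₀ (norm_nonneg _) hx)

lemma gaussCoeff_sub_one_succ_sub (a b : ℂ) (n : ℕ) :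
    gaussCoeff (a - 1) b 1 (n + 1) - gaussCoeff a b 1 (n + 1) =
      -(gaussCoeff a b 1 n * ((b + n) / (n + 1))) := by
  have hsucc : (ascPochhammer ℂ (n + 1)).eval (a - 1) = (a - 1) * (ascPochhammer ℂ n).eval a := by
    simp [ascPochhammer_succ_left]
  have hn : (n : ℂ) + 1 ≠ 0 := by exact_mod_cast n.succ_ne_zero
  have hn' : 1 + (n : ℂ) ≠ 0 := by rwa [add_comm]
  have hf : (n ! : ℂ) ≠ 0 := by exact_mod_cast n.factorial_ne_zero
  simp only [gaussCoeff, ascPochhammer_eval_one, hsucc, ascPochhammer_succ_eval,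
    Nat.factorial_succ]
  push_cast
  field_simp
  ring

lemma norm_gaussF_sub_one_sub_le {a b : ℂ} (h : a.re + b.re < 1) {x : ℂ} (hx : ‖x‖ ≤ 1) :
    ‖GaussF (a - 1) b 1 x - GaussF a b 1 x‖ ≤ (1 + ‖b‖) * (∑' n, ‖gaussCoeff a b 1 n‖) * ‖x‖ := by
  have h' : (a - 1).re + b.re < 1 := by simp only [Complex.sub_re, Complex.one_re]; linarith
  have hsum := (summable_gaussCoeff_one_mul_pow h' hx).sub (summable_gaussCoeff_one_mul_pow h hx)
  rw [gaussF_eq_tsum, gaussF_eq_tsum, ← Summable.tsum_sub (summable_gaussCoeff_one_mul_pow h' hx)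
    (summable_gaussCoeff_one_mul_pow h hx), hsum.tsum_eq_zero_add]
  have h0 : gaussCoeff (a - 1) b 1 0 * x ^ 0 - gaussCoeff a b 1 0 * x ^ 0 = 0 := by
    simp [gaussCoeff]
  rw [h0, zero_add, mul_right_comm]
  refine tsum_of_norm_bounded
    ((summable_norm_gaussCoeff_one h).hasSum.mul_left ((1 + ‖b‖) * ‖x‖)) fun n => ?_
  have hb : ‖b + n‖ ≤ (1 + ‖b‖) * (n + 1) := by
    have : ‖b + n‖ ≤ ‖b‖ + n := by simpa using norm_add_le b (n : ℂ)
    nlinarith [norm_nonneg b]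
  have hx' : ‖x‖ ^ (n + 1) ≤ ‖x‖ := pow_le_of_le_one (norm_nonneg _) hx n.succ_ne_zero
  have hn : ‖(n : ℂ) + 1‖ = n + 1 := by exact_mod_cast Complex.norm_natCast (n + 1)
  have hq : ‖b + n‖ / (n + 1) ≤ 1 + ‖b‖ := (div_le_iff₀ (by positivity)).mpr hb
  rw [← sub_mul, gaussCoeff_sub_one_succ_sub, norm_mul, norm_neg, norm_mul, norm_div, norm_pow, hn]
  calc _ ≤ ‖gaussCoeff a b 1 n‖ * (1 + ‖b‖) * ‖x‖ := by gcongr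
    _ = _ := by ring

lemma rpow_le_two_rpow_abs_mul_rpow {b x : ℝ} (hb : 0 < b) (h1 : b / 2 ≤ x) (h2 : x ≤ 2 * b)
    (q : ℝ) : x ^ q ≤ 2 ^ |q| * b ^ q := by
  have hx : 0 < x := by linarith
  rcases le_or_gt 0 q with hq | hq
  · rw [abs_of_nonneg hq, ← mul_rpow (by norm_num) hb.le]
    exact rpow_le_rpow hx.le h2 hq
  · rw [abs_of_neg hq, rpow_neg (by norm_num), ← inv_rpow (by norm_num),
      ← mul_rpow (by norm_num) hb.le, inv_mul_eq_div]
    exact rpow_le_rpow_of_nonpos (by positivity) h1 hq.le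

lemma rpow_le_rpow_add_rpow_sq {b v : ℝ} (hb : 1 ≤ b) (h1 : b ≤ v) (h2 : v ≤ b ^ 2) (p : ℝ) :
    v ^ p ≤ b ^ p + (b ^ p) ^ 2 := by
  have hb0 : 0 < b := by linarith
  rcases le_or_gt 0 p with hp | hp
  · calc v ^ p ≤ (b ^ 2) ^ p := rpow_le_rpow (by linarith) h2 hp
      _ = (b ^ p) ^ 2 := (rpow_pow_comm hb0.le p 2).symm
      _ ≤ _ := le_add_of_nonneg_left (by positivity)
  · calc v ^ p ≤ b ^ p := rpow_le_rpow_of_nonpos hb0 h1 hp.le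
      _ ≤ _ := le_add_of_nonneg_right (by positivity)

lemma rpow_mul_rpow_sub_le {a q b T y : ℝ} (hy : 0 < y) (hyT : y < T) (hTb : T ≤ b) :
    y ^ a * (b - y) ^ q ≤ 2 ^ |q| * b ^ q * y ^ a + 2 ^ |a| * T ^ a * (b - y) ^ q := by
  have hT : 0 < T := hy.trans hyT
  have hb : 0 < b := by linarith
  have hby : 0 < b - y := by linarith
  rcases le_or_gt y (T / 2) with hyh | hyh
  · calc y ^ a * (b - y) ^ q ≤ y ^ a * (2 ^ |q| * b ^ q) := by
          gcongr
          exact rpow_le_two_rpow_abs_mul_rpow (by linarith) (by linarith) (by linarith) q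
      _ ≤ _ := by
          rw [mul_comm]
          exact le_add_of_nonneg_right (mul_nonneg (by positivity) (rpow_nonneg hby.le q))
  · calc y ^ a * (b - y) ^ q ≤ 2 ^ |a| * T ^ a * (b - y) ^ q := by
          gcongr
          exact rpow_le_two_rpow_abs_mul_rpow hT (by linarith) (by linarith) a
      _ ≤ _ := le_add_of_nonneg_left (by positivity)

lemma integral_rpow_sub_one_le {c b p : ℝ} (hc : 0 < c) (hcb : c ≤ b) (hp : p ≠ 0) :
    ∫ t in c..b, t ^ (p - 1) ≤ (b ^ p + c ^ p) / |p| := by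
  have h0 : (0 : ℝ) ∉ uIcc c b := by
    rw [uIcc_of_le hcb]; exact fun h => absurd h.1 (not_le.mpr hc)
  rw [integral_rpow (Or.inr ⟨by contrapose! hp; linarith, h0⟩), sub_add_cancel]
  have hbp := rpow_nonneg (hc.le.trans hcb) p
  have hcp := rpow_nonneg hc.le p
  rcases hp.lt_or_gt with hp | hp
  · rw [abs_of_neg hp, ← neg_div_neg_eq]
    exact div_le_div_of_nonneg_right (by linarith) (by linarith)
  · rw [abs_of_pos hp]
    exact div_le_div_of_nonneg_right (by linarith) hp.le

lemma integral_Ioo_rpow {a T : ℝ} (ha : -1 < a) (hT : 0 < T) :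
    ∫ y in Ioo 0 T, y ^ a = T ^ (1 + a) / (1 + a) := by
  rw [← integral_Ioc_eq_integral_Ioo, ← intervalIntegral.integral_of_le hT.le,
    integral_rpow (Or.inl ha), zero_rpow (by linarith), sub_zero, add_comm a 1]

lemma integrableOn_Ioo_sub_rpow {b T q : ℝ} (hTb : T < b) :
    IntegrableOn (fun y => (b - y) ^ q) (Ioo 0 T) :=
  (ContinuousOn.integrableOn_Icc ((continuousOn_const.sub continuousOn_id).rpow_const fun _ hy =>
    Or.inl (sub_ne_zero.mpr (hy.2.trans_lt hTb).ne'))).mono_set Ioo_subset_Icc_self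

lemma integral_Ioo_sub_rpow_le {b T p : ℝ} (hT : 0 < T) (hTb : T < b) (hp : p ≠ 0) :
    ∫ y in Ioo 0 T, (b - y) ^ (p - 1) ≤ (b ^ p + (b - T) ^ p) / |p| := by
  rw [← integral_Ioc_eq_integral_Ioo, ← intervalIntegral.integral_of_le hT.le,
    intervalIntegral.integral_comp_sub_left (fun t => t ^ (p - 1)), sub_zero]
  exact integral_rpow_sub_one_le (by linarith) (by linarith) hp

lemma sq_sub_sq_rpow_le {b y : ℝ} (hy : 0 ≤ y) (hyb : y < b) (q : ℝ) :
    (b ^ 2 - y ^ 2) ^ q ≤ 2 ^ |q| * b ^ q * (b - y) ^ q := by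
  have hby : 0 < b - y := by linarith
  rw [show b ^ 2 - y ^ 2 = (b + y) * (b - y) by ring, mul_rpow (by linarith) hby.le]
  refine mul_le_mul_of_nonneg_right ?_ (rpow_nonneg hby.le q)
  exact rpow_le_two_rpow_abs_mul_rpow (by linarith) (by linarith) (by linarith) q

lemma mul_rpow_sq_sub_sq_le {a p z y : ℝ} (hy : 0 < y) (hyz : y < z - 1) :
    (z ^ 2 - z) * (y ^ a * ((z + 1) ^ 2 - y ^ 2) ^ (p - 1)) ≤
      2 ^ |p - 1| * (2 ^ |p - 1| * ((z + 1) ^ p) ^ 2 * y ^ a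
        + 2 ^ |a| * ((z - 1) ^ (1 + a) * (z + 1) ^ p) * (z + 1 - y) ^ (p - 1)) := by
  set b := z + 1
  set T := z - 1
  set q := p - 1
  have hb : 0 < b := by linarith
  have hT : 0 < T := by linarith
  have hB : 0 ≤ b ^ q := rpow_nonneg hb.le q
  have hPB : b ^ p = b * b ^ q := by
    rw [rpow_sub_one hb.ne', mul_div_cancel₀ _ hb.ne']
  have hzz : 0 ≤ z ^ 2 - z := by nlinarith
  have hP2 : (z ^ 2 - z) * (b ^ q) ^ 2 ≤ (b ^ p) ^ 2 := by
    rw [hPB, mul_pow]; gcongr; nlinarith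
  have hP1 : (z ^ 2 - z) * b ^ q * T ^ a ≤ T ^ (1 + a) * b ^ p := by
    rw [hPB, rpow_add hT, rpow_one, show z ^ 2 - z = z * T by ring]
    have := mul_nonneg hB (rpow_nonneg hT.le a)
    nlinarith
  calc (z ^ 2 - z) * (y ^ a * (b ^ 2 - y ^ 2) ^ q)
      ≤ (z ^ 2 - z) * (y ^ a * (2 ^ |q| * b ^ q * (b - y) ^ q)) := by
        gcongr
        exact sq_sub_sq_rpow_le hy.le (by linarith) q
    _ = 2 ^ |q| * ((z ^ 2 - z) * b ^ q * (y ^ a * (b - y) ^ q)) := by ring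
    _ ≤ 2 ^ |q| * ((z ^ 2 - z) * b ^ q *
          (2 ^ |q| * b ^ q * y ^ a + 2 ^ |a| * T ^ a * (b - y) ^ q)) := by
        gcongr
        exact rpow_mul_rpow_sub_le hy hyz (by linarith)
    _ = 2 ^ |q| * (2 ^ |q| * ((z ^ 2 - z) * (b ^ q) ^ 2) * y ^ a
        + 2 ^ |a| * ((z ^ 2 - z) * b ^ q * T ^ a) * (b - y) ^ q) := by ring
    _ ≤ _ := by
        have := rpow_nonneg hy.le a
        have := rpow_nonneg (by linarith : 0 ≤ b - y) q
        gcongr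

lemma exists_rpow_majorant (a p : ℝ) : ∃ c > 0, ∀ z y : ℝ, 0 < y → y < z - 1 →
    y ^ a * ((z ^ 2 - z) * ((z + 1) ^ 2 - y ^ 2) ^ (p - 1) + ((z + 1) ^ 2 - y ^ 2) ^ p) ≤
      c * (((z + 1) ^ p + ((z + 1) ^ p) ^ 2) * y ^ a
        + (z - 1) ^ (1 + a) * (z + 1) ^ p * (z + 1 - y) ^ (p - 1)) := by
  set k₁ : ℝ := 2 ^ |p - 1| * 2 ^ |p - 1|
  set k₂ : ℝ := 2 ^ |p - 1| * 2 ^ |a|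
  refine ⟨k₁ + k₂ + 1, by positivity, fun z y hy hyz => ?_⟩
  have hb : 1 ≤ z + 1 := by linarith
  set P := (z + 1) ^ p
  set X := (P + P ^ 2) * y ^ a
  set Y := (z - 1) ^ (1 + a) * P * (z + 1 - y) ^ (p - 1)
  have hP : 0 ≤ P := rpow_nonneg (by linarith) p
  have hya : 0 ≤ y ^ a := rpow_nonneg hy.le a
  have hY : 0 ≤ Y := by
    have := rpow_nonneg (by linarith : 0 ≤ z - 1) (1 + a)
    have := rpow_nonneg (by linarith : 0 ≤ z + 1 - y) (p - 1)
    positivity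
  have hv : y ^ a * ((z + 1) ^ 2 - y ^ 2) ^ p ≤ X := by
    rw [mul_comm]
    exact mul_le_mul_of_nonneg_right
      (rpow_le_rpow_add_rpow_sq hb (by nlinarith) (by nlinarith) p) hya
  have hw := mul_rpow_sq_sub_sq_le (a := a) (p := p) hy hyz
  have hP2 : P ^ 2 * y ^ a ≤ X := by nlinarith
  have hX : 0 ≤ X := by positivity
  have hk₁ : 0 ≤ k₁ := by positivity
  have hk₂ : 0 ≤ k₂ := by positivity
  nlinarith [mul_le_mul_of_nonneg_left hP2 hk₁, mul_nonneg hk₁ hY, mul_nonneg hk₂ hX]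

lemma integrableOn_majorant {a p z : ℝ} (ha : -1 < a) (hz : 1 < z) :
    IntegrableOn (fun y => ((z + 1) ^ p + ((z + 1) ^ p) ^ 2) * y ^ a
      + (z - 1) ^ (1 + a) * (z + 1) ^ p * (z + 1 - y) ^ (p - 1)) (Ioo 0 (z - 1)) :=
  (((intervalIntegral.integrableOn_Ioo_rpow_iff (by linarith)).mpr ha).const_mul _).add
    ((integrableOn_Ioo_sub_rpow (by linarith)).const_mul _)

lemma exists_integral_majorant_le {a p : ℝ} (ha : -1 < a) (hp : p ≠ 0) : ∃ C > 0, ∀ z : ℝ, 1 < z →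
    ∫ y in Ioo 0 (z - 1), (((z + 1) ^ p + ((z + 1) ^ p) ^ 2) * y ^ a
      + (z - 1) ^ (1 + a) * (z + 1) ^ p * (z + 1 - y) ^ (p - 1)) ≤
      C * (z - 1) ^ (1 + a) * ((z + 1) ^ p + ((z + 1) ^ p) ^ 2) := by
  have ha' : 0 < 1 + a := by linarith
  refine ⟨1 / (1 + a) + (1 + 2 ^ p) / |p|, by positivity, fun z hz => ?_⟩
  have hT : 0 < z - 1 := by linarith
  set P := (z + 1) ^ p
  have hP : 0 ≤ P := rpow_nonneg (by linarith) p
  have hTa : 0 ≤ (z - 1) ^ (1 + a) := rpow_nonneg hT.le _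
  have h2p : (0 : ℝ) ≤ 2 ^ p := by positivity
  have hJ := integral_Ioo_sub_rpow_le (b := z + 1) hT (by linarith) hp
  rw [show z + 1 - (z - 1) = 2 by ring] at hJ
  rw [integral_add (((intervalIntegral.integrableOn_Ioo_rpow_iff hT).mpr ha).const_mul _)
      ((integrableOn_Ioo_sub_rpow (by linarith)).const_mul _),
    integral_const_mul, integral_const_mul, integral_Ioo_rpow ha hT]
  calc (P + P ^ 2) * ((z - 1) ^ (1 + a) / (1 + a))
        + (z - 1) ^ (1 + a) * P * ∫ y in Ioo 0 (z - 1), (z + 1 - y) ^ (p - 1)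
      ≤ (P + P ^ 2) * ((z - 1) ^ (1 + a) / (1 + a))
        + (z - 1) ^ (1 + a) * P * ((P + 2 ^ p) / |p|) := by gcongr
    _ ≤ _ := by
      have : P * (P + 2 ^ p) ≤ (1 + 2 ^ p) * (P + P ^ 2) := by nlinarith
      rw [div_eq_mul_inv, div_eq_mul_inv, div_eq_mul_inv, div_eq_mul_inv]
      have hp' : 0 ≤ |p|⁻¹ := by positivity
      nlinarith [mul_le_mul_of_nonneg_left this (mul_nonneg hTa hp')]

noncomputable def gaussCombination (M : ℂ) (z y : ℝ) : ℂ :=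
  (((z - z ^ 2 : ℝ) : ℂ) + M * ((1 - z ^ 2 - y ^ 2 : ℝ) : ℂ)) *
      GaussF (1/2 - M) (1/2 - M) 1 ((((z - 1) ^ 2 - y ^ 2) / ((z + 1) ^ 2 - y ^ 2) : ℝ) : ℂ)
    + ((z ^ 2 - 1 + y ^ 2 : ℝ) : ℂ) * (1/2 + M) *
      GaussF (-(1/2) - M) (1/2 - M) 1 ((((z - 1) ^ 2 - y ^ 2) / ((z + 1) ^ 2 - y ^ 2) : ℝ) : ℂ)

lemma combination_eq_diff_add (M F₁ F₂ : ℂ) (z y : ℝ) :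
    (((z - z ^ 2 : ℝ) : ℂ) + M * ((1 - z ^ 2 - y ^ 2 : ℝ) : ℂ)) * F₁
      + ((z ^ 2 - 1 + y ^ 2 : ℝ) : ℂ) * (1/2 + M) * F₂ =
    ((z ^ 2 - z : ℝ) : ℂ) * (1 + 2 * M) * (F₂ - F₁)
      + (((z - 1) ^ 2 - y ^ 2 : ℝ) : ℂ) * (M * F₁ - (1/2 + M) * F₂) := by
  push_cast
  ring

lemma exists_norm_gaussCombination_le {M : ℂ} (hM : 0 < M.re) :
    ∃ K > 0, ∀ z y : ℝ, 0 < y → y < z - 1 →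
      ‖gaussCombination M z y‖ ≤
        K * ((z - 1) ^ 2 - y ^ 2) * ((z ^ 2 - z) / ((z + 1) ^ 2 - y ^ 2) + 1) := by
  set α : ℂ := 1/2 - M
  have hα : α.re + α.re < 1 := by simp only [α, Complex.sub_re]; norm_num; linarith
  have hα' : (α - 1).re + α.re < 1 := by simp only [Complex.sub_re, Complex.one_re]; linarith
  set S := ∑' n, ‖gaussCoeff α α 1 n‖
  set S' := ∑' n, ‖gaussCoeff (α - 1) α 1 n‖
  set A := ‖1 + 2 * M‖ * ((1 + ‖α‖) * S)
  set B := ‖M‖ * S + ‖1/2 + M‖ * S'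
  have hS : 0 ≤ S := tsum_nonneg fun _ => norm_nonneg _
  have hS' : 0 ≤ S' := tsum_nonneg fun _ => norm_nonneg _
  refine ⟨A + B + 1, by positivity, fun z y hy hyz => ?_⟩
  set u := (z - 1) ^ 2 - y ^ 2
  set v := (z + 1) ^ 2 - y ^ 2
  have hu : 0 < u := by nlinarith
  have hv : 0 < v := by nlinarith
  have hx : ‖((u / v : ℝ) : ℂ)‖ ≤ 1 := by
    rw [Complex.norm_real, norm_of_nonneg (div_pos hu hv).le, div_le_one hv]; linarith
  set F₁ := GaussF α α 1 ((u / v : ℝ) : ℂ)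
  set F₂ := GaussF (α - 1) α 1 ((u / v : ℝ) : ℂ)
  have hD : ‖F₂ - F₁‖ ≤ (1 + ‖α‖) * S * (u / v) := by
    have := norm_gaussF_sub_one_sub_le hα hx
    rwa [Complex.norm_real, norm_of_nonneg (div_pos hu hv).le] at this
  have hF : ‖M * F₁ - (1/2 + M) * F₂‖ ≤ B := by
    calc _ ≤ ‖M‖ * ‖F₁‖ + ‖1/2 + M‖ * ‖F₂‖ := by
          rw [← norm_mul, ← norm_mul]; exact norm_sub_le _ _
      _ ≤ ‖M‖ * S + ‖1/2 + M‖ * S' := by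
          gcongr
          · exact norm_gaussF_one_le hα hx
          · exact norm_gaussF_one_le hα' hx
  have hzz : 0 ≤ z ^ 2 - z := by nlinarith
  rw [gaussCombination, show (-(1/2) - M : ℂ) = 1/2 - M - 1 by ring, combination_eq_diff_add]
  change ‖((z ^ 2 - z : ℝ) : ℂ) * (1 + 2 * M) * (F₂ - F₁) + (u : ℂ) * (M * F₁ - (1/2 + M) * F₂)‖ ≤ _
  calc _ ≤ ‖((z ^ 2 - z : ℝ) : ℂ) * (1 + 2 * M) * (F₂ - F₁)‖
        + ‖(u : ℂ) * (M * F₁ - (1/2 + M) * F₂)‖ := norm_add_le _ _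
    _ ≤ (z ^ 2 - z) * ‖1 + 2 * M‖ * ((1 + ‖α‖) * S * (u / v)) + u * B := by
        rw [norm_mul, norm_mul, norm_mul, Complex.norm_real, Complex.norm_real, norm_of_nonneg hzz,
          norm_of_nonneg hu.le]
        gcongr
    _ = u * (A * ((z ^ 2 - z) / v) + B) := by simp only [A]; field_simp
    _ ≤ _ := by
        have hw : 0 ≤ (z ^ 2 - z) / v := by positivity
        have hA : 0 ≤ A := by positivity
        have hB : 0 ≤ B := by positivity
        nlinarith [mul_nonneg hu.le (mul_nonneg hB hw), mul_nonneg hu.le hw, mul_nonneg hu.le hA]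

noncomputable def gaussIntegrand (a : ℝ) (M : ℂ) (z y : ℝ) : ℝ :=
  y ^ a * ((z + 1) ^ 2 - y ^ 2) ^ M.re *
    (((z - 1) ^ 2 - y ^ 2) * Real.sqrt ((z + 1) ^ 2 - y ^ 2))⁻¹ * ‖gaussCombination M z y‖

lemma gaussIntegrand_nonneg (a : ℝ) (M : ℂ) {z y : ℝ} (hy : 0 < y) (hyz : y < z - 1) :
    0 ≤ gaussIntegrand a M z y := by
  have hu : 0 < (z - 1) ^ 2 - y ^ 2 := by nlinarith
  have hv : 0 < (z + 1) ^ 2 - y ^ 2 := by nlinarith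
  unfold gaussIntegrand
  have := rpow_nonneg hy.le a
  have := rpow_nonneg hv.le M.re
  positivity

lemma gaussIntegrand_le {a K : ℝ} {M : ℂ} {z y : ℝ} (hy : 0 < y) (hyz : y < z - 1)
    (hK : ‖gaussCombination M z y‖ ≤
      K * ((z - 1) ^ 2 - y ^ 2) * ((z ^ 2 - z) / ((z + 1) ^ 2 - y ^ 2) + 1)) :
    gaussIntegrand a M z y ≤ K * (y ^ a * ((z ^ 2 - z) * ((z + 1) ^ 2 - y ^ 2) ^ (M.re - 1/2 - 1)
      + ((z + 1) ^ 2 - y ^ 2) ^ (M.re - 1/2))) := by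
  set u := (z - 1) ^ 2 - y ^ 2
  set v := (z + 1) ^ 2 - y ^ 2
  have hu : 0 < u := by nlinarith
  have hv : 0 < v := by nlinarith
  have hsqrt : v ^ M.re / Real.sqrt v = v ^ (M.re - 1/2) := by
    rw [Real.sqrt_eq_rpow, ← rpow_sub hv]
  have hpred : v ^ (M.re - 1/2) / v = v ^ (M.re - 1/2 - 1) := (rpow_sub_one hv.ne' _).symm
  have hfac : 0 ≤ y ^ a * v ^ M.re * (u * Real.sqrt v)⁻¹ := by
    have := rpow_nonneg hy.le a
    have := rpow_nonneg hv.le M.re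
    positivity
  calc gaussIntegrand a M z y
      ≤ y ^ a * v ^ M.re * (u * Real.sqrt v)⁻¹ * (K * u * ((z ^ 2 - z) / v + 1)) :=
        mul_le_mul_of_nonneg_left hK hfac
    _ = K * (y ^ a * ((z ^ 2 - z) * (v ^ M.re / Real.sqrt v / v) + v ^ M.re / Real.sqrt v)) := by
        field_simp
    _ = _ := by rw [hsqrt, hpred]

lemma exists_integral_gaussIntegrand_le {a : ℝ} (ha : -1 < a) {M : ℂ} (hM : 0 < M.re)
    (hM' : M.re ≠ 1/2) : ∃ C > 0, ∀ z : ℝ, 1 < z →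
      ∫ y in Ioo 0 (z - 1), gaussIntegrand a M z y ≤
        C * (z - 1) ^ (1 + a) * ((z + 1) ^ (M.re - 1/2) + ((z + 1) ^ (M.re - 1/2)) ^ 2) := by
  obtain ⟨K, hK0, hK⟩ := exists_norm_gaussCombination_le hM
  obtain ⟨c, hc0, hc⟩ := exists_rpow_majorant a (M.re - 1/2)
  obtain ⟨C, hC0, hC⟩ := exists_integral_majorant_le ha (sub_ne_zero.mpr hM')
  refine ⟨K * c * C, by positivity, fun z hz => ?_⟩
  set P := (z + 1) ^ (M.re - 1/2)
  calc ∫ y in Ioo 0 (z - 1), gaussIntegrand a M z y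
      ≤ ∫ y in Ioo 0 (z - 1), K * c * ((P + P ^ 2) * y ^ a
          + (z - 1) ^ (1 + a) * P * (z + 1 - y) ^ (M.re - 1/2 - 1)) := by
        refine integral_mono_of_nonneg ?_ ((integrableOn_majorant ha hz).const_mul _) ?_
        all_goals filter_upwards [ae_restrict_mem measurableSet_Ioo] with y ⟨hy, hyz⟩
        · exact gaussIntegrand_nonneg a M hy hyz
        · rw [mul_assoc]
          exact (gaussIntegrand_le hy hyz (hK z y hy hyz)).trans
            (mul_le_mul_of_nonneg_left (hc z y hy hyz) hK0.le)
    _ ≤ K * c * (C * (z - 1) ^ (1 + a) * (P + P ^ 2)) := by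
        rw [integral_const_mul]
        gcongr
        exact hC z hz
    _ = _ := by ring

theorem stmt2 (a : ℝ) (ha : a > -1) (M : ℂ) (hM : 0 < M.re) (hM' : M.re ≠ 1/2) :
    ∃ C > 0, ∀ z : ℝ, 1 < z →
      (M.re < 1/2 →
        (∫ y in Set.Ioo (0:ℝ) (z - 1),
            y ^ a * ((z + 1) ^ 2 - y ^ 2) ^ M.re *
              (((z - 1) ^ 2 - y ^ 2) * Real.sqrt ((z + 1) ^ 2 - y ^ 2))⁻¹ *
              Norm.norm
                ((((z - z ^ 2 : ℝ) : ℂ) + M * ((1 - z ^ 2 - y ^ 2 : ℝ) : ℂ)) *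
                    GaussF (1/2 - M) (1/2 - M) 1
                      ((((z - 1) ^ 2 - y ^ 2) / ((z + 1) ^ 2 - y ^ 2) : ℝ) : ℂ)
                  + ((z ^ 2 - 1 + y ^ 2 : ℝ) : ℂ) * (1/2 + M) *
                    GaussF (-(1/2) - M) (1/2 - M) 1
                      ((((z - 1) ^ 2 - y ^ 2) / ((z + 1) ^ 2 - y ^ 2) : ℝ) : ℂ)))
          ≤ C * (z - 1) ^ (1 + a) * (z + 1) ^ (M.re - 1/2)) ∧
      (1/2 < M.re →
        (∫ y in Set.Ioo (0:ℝ) (z - 1),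
            y ^ a * ((z + 1) ^ 2 - y ^ 2) ^ M.re *
              (((z - 1) ^ 2 - y ^ 2) * Real.sqrt ((z + 1) ^ 2 - y ^ 2))⁻¹ *
              Norm.norm
                ((((z - z ^ 2 : ℝ) : ℂ) + M * ((1 - z ^ 2 - y ^ 2 : ℝ) : ℂ)) *
                    GaussF (1/2 - M) (1/2 - M) 1
                      ((((z - 1) ^ 2 - y ^ 2) / ((z + 1) ^ 2 - y ^ 2) : ℝ) : ℂ)
                  + ((z ^ 2 - 1 + y ^ 2 : ℝ) : ℂ) * (1/2 + M) *
                    GaussF (-(1/2) - M) (1/2 - M) 1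
                      ((((z - 1) ^ 2 - y ^ 2) / ((z + 1) ^ 2 - y ^ 2) : ℝ) : ℂ)))
          ≤ C * (z - 1) ^ (1 + a) * (z + 1) ^ (2 * M.re - 1)) := by
  obtain ⟨C, hC0, hC⟩ := exists_integral_gaussIntegrand_le ha hM hM'
  refine ⟨2 * C, by positivity, fun z hz => ⟨fun hlt => ?_, fun hgt => ?_⟩⟩
  all_goals
    refine (hC z hz).trans ?_
    have hb : 1 ≤ z + 1 := by linarith
    have hT := rpow_nonneg (by linarith : 0 ≤ z - 1) (1 + a)
    have hP := rpow_nonneg (by linarith : 0 ≤ z + 1) (M.re - 1/2)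
  · have : (z + 1) ^ (M.re - 1/2) ≤ 1 := rpow_le_one_of_one_le_of_nonpos hb (by linarith)
    nlinarith [mul_nonneg hC0.le hT, mul_le_mul_of_nonneg_left this hP]
  · have : 1 ≤ (z + 1) ^ (M.re - 1/2) := one_le_rpow hb (by linarith)
    have hsq : ((z + 1) ^ (M.re - 1/2)) ^ 2 = (z + 1) ^ (2 * M.re - 1) := by
      rw [← rpow_mul_natCast (by linarith)]; push_cast; ring_nf
    rw [← hsq]
    nlinarith [mul_nonneg hC0.le hT, mul_le_mul_of_nonneg_left this hP]
end

section
/- Let a > −1 be real. Then, as the real variable z → +∞, (1/ln z) · F((a+1)/2, 1; (a+3)/2; (z−1)²/(z+1)²) tends to (1+a)/2. (This is the M = 1/2 case, where 3/2 − M = 1.) -/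
/-!
With `b = (a + 1) / 2` the series is `F(b, 1; b + 1; x) = ∑ b / (b + n) xⁿ`. For `n ≥ 1`,
`b / (b + n) = b / n - b² / (n (b + n))`, and the correction coefficients are summable, so
`F(b, 1; b + 1; x) + b log (1 - x)` stays bounded on `[0, 1)`. For `x = (z - 1)² / (z + 1)²`
one has `1 - x = 4 z / (z + 1)²`, hence `-log (1 - x) = 2 log (z + 1) - log z - log 4 ∼ log z`.
-/

open Filter Topology

lemma ascPochhammer_eval_mul_add_natCast {S : Type*} [CommSemiring S] (α : S) (n : ℕ) :
    (ascPochhammer S n).eval α * (α + n) = α * (ascPochhammer S n).eval (α + 1) := by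
  rw [← ascPochhammer_succ_eval, ascPochhammer_succ_left]
  simp [Polynomial.eval_comp]

lemma gaussF_one_add_one {α : ℂ} (hα : ∀ n : ℕ, α + n ≠ 0) (x : ℂ) :
    GaussF α 1 (α + 1) x = ∑' n : ℕ, α / (α + n) * x ^ n := by
  refine tsum_congr fun n => ?_
  have hpoch : (ascPochhammer ℂ n).eval (α + 1) ≠ 0 := by
    simp only [ne_eq, ascPochhammer_eval_eq_zero_iff, not_exists, not_and]
    intro k _ hk
    exact hα (k + 1) (by push_cast; linear_combination hk)
  have hfact : (n.factorial : ℂ) ≠ 0 := Nat.cast_ne_zero.mpr n.factorial_ne_zero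
  have hαn := hα n
  rw [ascPochhammer_eval_one]
  field_simp
  linear_combination x ^ n * ascPochhammer_eval_mul_add_natCast α n

lemma summable_sq_div_mul_add_natCast {b : ℝ} (hb : 0 < b) :
    Summable fun n : ℕ => b ^ 2 / ((n + 1) * (b + n + 1)) := by
  have hsq : Summable fun n : ℕ => b ^ 2 * (1 / ((n : ℝ) + 1) ^ 2) := by
    refine Summable.mul_left _ ?_
    exact_mod_cast (summable_nat_add_iff 1).mpr
      (Real.summable_one_div_nat_pow.mpr one_lt_two)
  refine hsq.of_nonneg_of_le (fun n => by positivity) fun n => ?_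
  rw [mul_one_div, sq ((n : ℝ) + 1)]
  gcongr
  linarith

lemma sq_div_mul_add_natCast_mul_pow_le {b : ℝ} (hb : 0 < b) {x : ℝ} (hx₀ : 0 ≤ x)
    (hx₁ : x ≤ 1) (n : ℕ) :
    b ^ 2 / ((n + 1) * (b + n + 1)) * x ^ (n + 1) ≤ b ^ 2 / ((n + 1) * (b + n + 1)) :=
  mul_le_of_le_one_right (by positivity) (pow_le_one₀ hx₀ hx₁)

lemma summable_sq_div_mul_add_natCast_mul_pow {b : ℝ} (hb : 0 < b) {x : ℝ} (hx₀ : 0 ≤ x)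
    (hx₁ : x ≤ 1) : Summable fun n : ℕ => b ^ 2 / ((n + 1) * (b + n + 1)) * x ^ (n + 1) :=
  (summable_sq_div_mul_add_natCast hb).of_nonneg_of_le (fun n => by positivity)
    (sq_div_mul_add_natCast_mul_pow_le hb hx₀ hx₁)

lemma hasSum_div_add_natCast_mul_pow {b : ℝ} (hb : 0 < b) {x : ℝ} (hx₀ : 0 ≤ x)
    (hx₁ : x < 1) :
    HasSum (fun n : ℕ => b / (b + n) * x ^ n)
      (1 - b * Real.log (1 - x) - ∑' n : ℕ, b ^ 2 / ((n + 1) * (b + n + 1)) * x ^ (n + 1)) := by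
  have hlog := Real.hasSum_pow_div_log_of_abs_lt_one (by rwa [abs_of_nonneg hx₀])
  have hterm : ∀ n : ℕ, b / (b + ↑(n + 1)) * x ^ (n + 1) =
      b * (x ^ (n + 1) / (n + 1)) - b ^ 2 / ((n + 1) * (b + n + 1)) * x ^ (n + 1) := by
    intro n
    push_cast
    field_simp
    ring
  have hshift : HasSum (fun n : ℕ => b / (b + ↑(n + 1)) * x ^ (n + 1))
      (b * -Real.log (1 - x) - ∑' n : ℕ, b ^ 2 / ((n + 1) * (b + n + 1)) * x ^ (n + 1)) := by
    rw [funext hterm]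
    exact (hlog.mul_left b).sub (summable_sq_div_mul_add_natCast_mul_pow hb hx₀ hx₁.le).hasSum
  convert HasSum.zero_add (f := fun n : ℕ => b / (b + n) * x ^ n) hshift using 1
  simp only [CharP.cast_eq_zero, add_zero, div_self hb.ne', pow_zero, mul_one]
  ring

lemma abs_tsum_div_add_natCast_mul_pow_add_log_le {b : ℝ} (hb : 0 < b) {x : ℝ}
    (hx₀ : 0 ≤ x) (hx₁ : x < 1) :
    |∑' n : ℕ, b / (b + n) * x ^ n + b * Real.log (1 - x)| ≤
      1 + ∑' n : ℕ, b ^ 2 / ((n + 1) * (b + n + 1)) := by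
  rw [(hasSum_div_add_natCast_mul_pow hb hx₀ hx₁).tsum_eq]
  have hrem_nonneg : 0 ≤ ∑' n : ℕ, b ^ 2 / ((n + 1) * (b + n + 1)) * x ^ (n + 1) :=
    tsum_nonneg fun n => by positivity
  have hrem_le : ∑' n : ℕ, b ^ 2 / ((n + 1) * (b + n + 1)) * x ^ (n + 1) ≤
      ∑' n : ℕ, b ^ 2 / ((n + 1) * (b + n + 1)) :=
    (summable_sq_div_mul_add_natCast_mul_pow hb hx₀ hx₁.le).tsum_le_tsum
      (sq_div_mul_add_natCast_mul_pow_le hb hx₀ hx₁.le) (summable_sq_div_mul_add_natCast hb)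
  rw [abs_le]
  constructor <;> linarith

lemma sq_sub_one_div_sq_add_one_lt_one {z : ℝ} (hz : 0 < z) : (z - 1) ^ 2 / (z + 1) ^ 2 < 1 := by
  rw [div_lt_one (by positivity)]
  nlinarith

lemma log_one_sub_sq_sub_one_div_sq_add_one {z : ℝ} (hz : 0 < z) :
    Real.log (1 - (z - 1) ^ 2 / (z + 1) ^ 2) = Real.log 4 + Real.log z - 2 * Real.log (z + 1) := by
  have hquot : 1 - (z - 1) ^ 2 / (z + 1) ^ 2 = 4 * z / (z + 1) ^ 2 := by
    field_simp
    ring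
  rw [hquot, Real.log_div (by positivity) (by positivity), Real.log_mul (by norm_num) hz.ne',
    Real.log_pow]
  push_cast
  ring

lemma tendsto_inv_log_mul_log_one_sub_sq_sub_one_div_sq_add_one :
    Tendsto (fun z : ℝ => (Real.log z)⁻¹ * Real.log (1 - (z - 1) ^ 2 / (z + 1) ^ 2))
      atTop (𝓝 (-1)) := by
  have hinv : Tendsto (fun z : ℝ => (Real.log z)⁻¹) atTop (𝓝 0) :=
    Real.tendsto_log_atTop.inv_tendsto_atTop
  have herr : Tendsto
      (fun z : ℝ => (Real.log z)⁻¹ * (Real.log 4 - 2 * (Real.log (z + 1) - Real.log z)))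
      atTop (𝓝 0) := by
    simpa using
      hinv.mul ((Real.tendsto_log_comp_add_sub_log 1).const_mul 2 |>.const_sub (Real.log 4))
  have hsum := herr.const_add (-1 : ℝ)
  rw [add_zero] at hsum
  refine hsum.congr' ?_
  filter_upwards [eventually_gt_atTop 1] with z hz
  rw [log_one_sub_sq_sub_one_div_sq_add_one (by linarith)]
  field_simp [(Real.log_pos hz).ne']
  ring

lemma tendsto_inv_log_mul_tsum_div_add_natCast_mul_pow {b : ℝ} (hb : 0 < b) :
    Tendsto
      (fun z : ℝ => (Real.log z)⁻¹ * ∑' n : ℕ, b / (b + n) * ((z - 1) ^ 2 / (z + 1) ^ 2) ^ n)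
      atTop (𝓝 b) := by
  set x : ℝ → ℝ := fun z => (z - 1) ^ 2 / (z + 1) ^ 2
  have hbdd : IsBoundedUnder (· ≤ ·) atTop
      fun z => ‖∑' n : ℕ, b / (b + n) * x z ^ n + b * Real.log (1 - x z)‖ := by
    refine isBoundedUnder_of_eventually_le
      (a := 1 + ∑' n : ℕ, b ^ 2 / ((n + 1) * (b + n + 1))) ?_
    filter_upwards [eventually_gt_atTop 0] with z hz
    exact abs_tsum_div_add_natCast_mul_pow_add_log_le hb (by positivity)
      (sq_sub_one_div_sq_add_one_lt_one hz)
  have hmain := (Real.tendsto_log_atTop.inv_tendsto_atTop.zero_mul_isBoundedUnder_le hbdd).sub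
    (tendsto_inv_log_mul_log_one_sub_sq_sub_one_div_sq_add_one.const_mul b)
  refine (by simpa using hmain : Tendsto _ atTop (𝓝 b)).congr fun z => ?_
  ring

theorem stmt5 (a : ℝ) (ha : a > -1) :
    Tendsto
      (fun z : ℝ =>
        ((Real.log z : ℂ))⁻¹ *
          GaussF (((a : ℂ) + 1) / 2) 1 (((a : ℂ) + 3) / 2)
            (((z - 1) ^ 2 / (z + 1) ^ 2 : ℝ) : ℂ))
      atTop
      (𝓝 (((1 + a : ℝ) : ℂ) / 2)) := by
  set b : ℝ := (a + 1) / 2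
  have hb : 0 < b := by simp only [b]; linarith
  have hα : ∀ n : ℕ, (b : ℂ) + n ≠ 0 := fun n => by
    exact_mod_cast (by positivity : 0 < b + n).ne'
  have hparams : ((a : ℂ) + 1) / 2 = b ∧ ((a : ℂ) + 3) / 2 = b + 1 := by
    constructor <;> (push_cast [b]; ring)
  rw [hparams.1, hparams.2, show (((1 + a : ℝ) : ℂ) / 2) = b by push_cast [b]; ring]
  refine ((Complex.continuous_ofReal.tendsto b).comp
    (tendsto_inv_log_mul_tsum_div_add_natCast_mul_pow hb)).congr fun z => ?_
  simp [gaussF_one_add_one hα, Complex.ofReal_tsum]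
end

section
/- For all real a > −1 and all real z > 1: ∫₀^{z−1} y^a ((z+1)² − y²)^{−3/2} dy = (z−1)^{a+1} / (4(a+1) z (z+1)³) · [ (a+2)(z+1)² F(−1/2, (a+1)/2; (a+3)/2; (z−1)²/(z+1)²) − (z(4a + z + 2) + 1) F(1/2, (a+1)/2; (a+3)/2; (z−1)²/(z+1)²) ]. -/
open MeasureTheory

/-!
Expanding `(c² - y²)^(-μ) = c^(-2μ) (1 - y²/c²)^(-μ)` binomially and integrating term by term,
`∫₀^L y^a (c² - y²)^(-μ) dy = L^(a+1) / ((a+1) c^(2μ)) · F(μ, b; b+1; L²/c²)` with `b = (a+1)/2`,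
because `(b)ₙ / (b+1)ₙ = b / (b+n)`. For `μ = 3/2`, `L = z - 1`, `c = z + 1`, Gauss's contiguous
relation in the first parameter expresses `F(3/2, b; b+1; x)` through `F(∓1/2, b; b+1; x)`, and
`1 - x = 4z / (z+1)²` gives the stated form.
-/

open Filter Topology Polynomial Nat Set

theorem ascPochhammer_succ_eval_left {S : Type*} [CommSemiring S] (n : ℕ) (s : S) :
    (ascPochhammer S (n + 1)).eval s = s * (ascPochhammer S n).eval (s + 1) := by
  rw [ascPochhammer_succ_left, eval_mul, eval_X, eval_comp, eval_add, eval_X, eval_one]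

section

variable {𝕂 : Type*} [RCLike 𝕂]

theorem ordinaryHypergeometricCoefficient_succ (a b c : 𝕂) (n : ℕ) :
    ordinaryHypergeometricCoefficient a b c (n + 1) =
      ordinaryHypergeometricCoefficient a b c n * ((a + n) * (b + n) / ((c + n) * (n + 1))) := by
  simp only [ordinaryHypergeometricCoefficient, ascPochhammer_succ_eval, factorial_succ,
    cast_mul, mul_inv, div_eq_mul_inv]
  push_cast
  ring

theorem tendsto_hypergeometric_term_ratio (a b c : 𝕂) :
    Tendsto (fun n : ℕ ↦ (a + n) * (b + n) / ((c + n) * (n + 1))) atTop (𝓝 1) := by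
  have h (p q : 𝕂) : Tendsto (fun n : ℕ ↦ (p + n) / (q + n)) atTop (𝓝 1) := by
    simpa using tendsto_add_mul_div_add_mul_atTop_nhds p q (1 : 𝕂) one_ne_zero
  simpa [mul_div_mul_comm, add_comm _ (1 : 𝕂)] using (h a c).mul (h b 1)

-- No hypothesis on `c`: when `c` is a nonpositive integer the coefficients vanish from some index
-- on (through the junk value `0⁻¹ = 0`), and the ratio bound below still holds.
theorem summable_norm_ordinaryHypergeometric (a b c : 𝕂) {x : 𝕂} (hx : ‖x‖ < 1) :
    Summable fun n ↦ ‖ordinaryHypergeometricCoefficient a b c n * x ^ n‖ := by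
  have hratio : ∀ᶠ n : ℕ in atTop,
      ‖(a + n) * (b + n) / ((c + n) * (n + 1))‖ * ‖x‖ ≤ (1 + ‖x‖) / 2 := by
    have := (tendsto_hypergeometric_term_ratio a b c).norm.mul_const ‖x‖
    rw [norm_one, one_mul] at this
    exact this.eventually (ge_mem_nhds (by linarith))
  refine summable_of_ratio_norm_eventually_le (r := (1 + ‖x‖) / 2) (by linarith) ?_
  filter_upwards [hratio] with n hn
  rw [norm_norm, norm_norm, ordinaryHypergeometricCoefficient_succ, pow_succ]
  generalize ordinaryHypergeometricCoefficient a b c n = C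
  calc _ = ‖(a + n) * (b + n) / ((c + n) * (n + 1))‖ * ‖x‖ * ‖C * x ^ n‖ := by
        simp only [norm_mul]; ring
    _ ≤ _ := mul_le_mul_of_nonneg_right hn (norm_nonneg _)

theorem hasSum_ordinaryHypergeometric (a b c : 𝕂) {x : 𝕂} (hx : ‖x‖ < 1) :
    HasSum (fun n ↦ ordinaryHypergeometricCoefficient a b c n * x ^ n) (₂F₁ a b c x) := by
  rw [ordinaryHypergeometric_eq_tsum]
  simp only [smul_eq_mul]
  exact (summable_norm_ordinaryHypergeometric a b c hx).of_norm.hasSum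

theorem ordinaryHypergeometricCoefficient_sub_one_succ (a b c : 𝕂) (n : ℕ) :
    ordinaryHypergeometricCoefficient (a - 1) b c (n + 1) =
      (a - 1) * ordinaryHypergeometricCoefficient a b c n * ((b + n) / ((c + n) * (n + 1))) := by
  simp only [ordinaryHypergeometricCoefficient, ascPochhammer_succ_eval_left (s := a - 1),
    sub_add_cancel, ascPochhammer_succ_eval (k := b), ascPochhammer_succ_eval (k := c),
    factorial_succ, cast_mul, mul_inv, div_eq_mul_inv]
  push_cast
  ring

theorem mul_ordinaryHypergeometricCoefficient_add_one (a b c : 𝕂) (n : ℕ) :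
    a * ordinaryHypergeometricCoefficient (a + 1) b c n =
      ordinaryHypergeometricCoefficient a b c n * (a + n) := by
  have h : a * (ascPochhammer 𝕂 n).eval (a + 1) = (ascPochhammer 𝕂 n).eval a * (a + n) := by
    rw [← ascPochhammer_succ_eval, ascPochhammer_succ_eval_left]
  simp only [ordinaryHypergeometricCoefficient]
  linear_combination ((n ! : 𝕂)⁻¹ * (ascPochhammer 𝕂 n).eval b * ((ascPochhammer 𝕂 n).eval c)⁻¹) * h

theorem ordinaryHypergeometric_contiguous (a b c : 𝕂) (hc : ∀ n : ℕ, c + n ≠ 0) {x : 𝕂}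
    (hx : ‖x‖ < 1) :
    (c - a) * ₂F₁ (a - 1) b c x + (2 * a - c + (b - a) * x) * ₂F₁ a b c x
      + a * (x - 1) * ₂F₁ (a + 1) b c x = 0 := by
  set T : 𝕂 → ℕ → 𝕂 := fun s n ↦ ordinaryHypergeometricCoefficient s b c n * x ^ n
  set A : ℕ → 𝕂 := fun n ↦ (c - a) * T (a - 1) n + (2 * a - c) * T a n - a * T (a + 1) n
  have hA : HasSum A ((c - a) * ₂F₁ (a - 1) b c x + (2 * a - c) * ₂F₁ a b c x
      - a * ₂F₁ (a + 1) b c x) :=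
    (((hasSum_ordinaryHypergeometric _ b c hx).mul_left _).add
      ((hasSum_ordinaryHypergeometric _ b c hx).mul_left _)).sub
      ((hasSum_ordinaryHypergeometric _ b c hx).mul_left _)
  have hA0 : A 0 = 0 := by
    simp only [A, T, ordinaryHypergeometricCoefficient, ascPochhammer_zero, eval_one, pow_zero]
    ring
  -- comparing coefficients: the series of `A` is that of `-x ((b - a) F(a) + a F(a + 1))`,
  -- shifted by one
  have hA_succ (n : ℕ) : A (n + 1) = -x * ((b - a) * T a n + a * T (a + 1) n) := by
    set β := (b + n) / ((c + n) * (n + 1))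
    have hβ : β * ((c + n) * (n + 1)) = b + n :=
      div_mul_cancel₀ _ (mul_ne_zero (hc n) (by exact_mod_cast n.succ_ne_zero))
    have hρ (s : 𝕂) : (s + n) * (b + n) / ((c + n) * (n + 1)) = (s + n) * β := mul_div_assoc ..
    simp only [A, T, ordinaryHypergeometricCoefficient_sub_one_succ,
      ordinaryHypergeometricCoefficient_succ a, ordinaryHypergeometricCoefficient_succ (a + 1), hρ,
      pow_succ]
    linear_combination x ^ n * x * (1 - (a + 1 + n) * β) *
        mul_ordinaryHypergeometricCoefficient_add_one a b c n
      - ordinaryHypergeometricCoefficient a b c n * x ^ n * x * hβ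
  have hA' : HasSum (fun n ↦ A (n + 1)) (-x * ((b - a) * ₂F₁ a b c x + a * ₂F₁ (a + 1) b c x)) := by
    simp only [hA_succ]
    exact (((hasSum_ordinaryHypergeometric _ b c hx).mul_left _).add
      ((hasSum_ordinaryHypergeometric _ b c hx).mul_left _)).mul_left _
  have hshift := ((hasSum_nat_add_iff' 1).mpr hA).unique hA'
  simp only [Finset.range_one, Finset.sum_singleton, hA0, sub_zero] at hshift
  linear_combination hshift

theorem ordinaryHypergeometricCoefficient_self_add_one (s : 𝕂) {b : 𝕂} (hb : ∀ n : ℕ, b + n ≠ 0)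
    (n : ℕ) :
    ordinaryHypergeometricCoefficient s b (b + 1) n =
      ordinaryHypergeometricCoefficient s 1 1 n * (b / (b + n)) := by
  have hb1 : (ascPochhammer 𝕂 n).eval (b + 1) ≠ 0 := by
    rw [Ne, ascPochhammer_eval_eq_zero_iff]
    rintro ⟨k, -, hk⟩
    exact hb (k + 1) (by push_cast; linear_combination hk)
  have h : (ascPochhammer 𝕂 n).eval b * (b + n) = b * (ascPochhammer 𝕂 n).eval (b + 1) := by
    rw [← ascPochhammer_succ_eval, ascPochhammer_succ_eval_left]
  simp only [ordinaryHypergeometricCoefficient, ascPochhammer_eval_one]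
  field_simp [hb n, (Nat.cast_ne_zero.mpr n.factorial_ne_zero : (n ! : 𝕂) ≠ 0)]
  linear_combination (ascPochhammer 𝕂 n).eval s * h

theorem ordinaryHypergeometricCoefficient_one_one (s : 𝕂) (n : ℕ) :
    ordinaryHypergeometricCoefficient s 1 1 n = (ascPochhammer 𝕂 n).eval s / n ! := by
  rw [ordinaryHypergeometricCoefficient, ascPochhammer_eval_one,
    mul_inv_cancel_right₀ (Nat.cast_ne_zero.mpr n.factorial_ne_zero), inv_mul_eq_div]

end

theorem hasSum_one_sub_rpow_neg (μ : ℝ) {t : ℝ} (ht : |t| < 1) :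
    HasSum (fun n ↦ ordinaryHypergeometricCoefficient μ 1 1 n * t ^ n) ((1 - t) ^ (-μ)) := by
  have h := (Real.one_add_rpow_hasFPowerSeriesOnBall_zero (a := -μ)).hasSum
    (y := -t) (by simpa [enorm_eq_nnnorm, ← NNReal.coe_lt_coe] using ht)
  rw [binomialSeries_eq_ordinaryHypergeometricSeries (b := (1 : ℝ)) (by intro k; norm_cast),
    neg_neg, zero_add, ← sub_eq_add_neg] at h
  have e (n : ℕ) : (ordinaryHypergeometricSeries ℝ μ 1 1).compContinuousLinearMap
      (-ContinuousLinearMap.id ℝ ℝ) n (fun _ ↦ -t) =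
        ordinaryHypergeometricCoefficient μ 1 1 n * t ^ n := by
    rw [FormalMultilinearSeries.compContinuousLinearMap_apply, ← smul_eq_mul,
      ← ordinaryHypergeometricSeries_apply_eq]
    congr 1
    ext; simp
  simpa only [e] using h

theorem rpow_add_two_mul_natCast {y : ℝ} (hy : 0 < y) (a : ℝ) (n : ℕ) :
    y ^ (a + 2 * n) = y ^ a * (y ^ 2) ^ n := by
  rw [Real.rpow_add hy, ← pow_mul, ← Real.rpow_natCast]
  push_cast
  ring_nf

theorem hasSum_rpow_mul_sq_sub_sq_rpow_neg (a μ : ℝ) {c y : ℝ} (hy : 0 < y) (hyc : y < c) :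
    HasSum (fun n : ℕ ↦ (c ^ 2) ^ (-μ) * ordinaryHypergeometricCoefficient μ 1 1 n / (c ^ 2) ^ n
      * y ^ (a + 2 * n)) (y ^ a * (c ^ 2 - y ^ 2) ^ (-μ)) := by
  have hc2 : 0 < c ^ 2 := by nlinarith
  have ht : |y ^ 2 / c ^ 2| < 1 := by
    rw [abs_of_nonneg (by positivity), div_lt_one hc2]
    nlinarith
  have hsplit : c ^ 2 - y ^ 2 = c ^ 2 * (1 - y ^ 2 / c ^ 2) := by
    rw [mul_sub, mul_one, mul_div_cancel₀ _ hc2.ne']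
  have hnonneg : 0 ≤ 1 - y ^ 2 / c ^ 2 := by linarith [(abs_lt.mp ht).2]
  rw [hsplit, Real.mul_rpow hc2.le hnonneg, mul_left_comm, ← mul_assoc]
  refine ((hasSum_one_sub_rpow_neg μ ht).mul_left ((c ^ 2) ^ (-μ) * y ^ a)).congr_fun fun n ↦ ?_
  rw [rpow_add_two_mul_natCast hy, div_pow]
  ring

theorem integral_Ioo_rpow_s8 {r L : ℝ} (hr : -1 < r) (hL : 0 ≤ L) :
    ∫ y in Ioo 0 L, y ^ r = L ^ (r + 1) / (r + 1) := by
  rw [← integral_Ioc_eq_integral_Ioo, ← intervalIntegral.integral_of_le hL, integral_rpow (.inl hr),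
    Real.zero_rpow (by linarith), sub_zero]

theorem integrableOn_Ioo_rpow {r L : ℝ} (hr : -1 < r) (hL : 0 ≤ L) :
    IntegrableOn (fun y : ℝ ↦ y ^ r) (Ioo 0 L) :=
  ((intervalIntegrable_iff_integrableOn_Ioc_of_le hL).mp
    (intervalIntegral.intervalIntegrable_rpow' hr)).mono_set Ioo_subset_Ioc_self

theorem integral_rpow_mul_sq_sub_sq_rpow_neg {a μ L c : ℝ} (ha : -1 < a) (hμ : 0 < μ)
    (hL : 0 < L) (hLc : L < c) :
    ∫ y in Ioo 0 L, y ^ a * (c ^ 2 - y ^ 2) ^ (-μ) =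
      L ^ (a + 1) / ((a + 1) * (c ^ 2) ^ μ) *
        ₂F₁ μ ((a + 1) / 2) ((a + 3) / 2) (L ^ 2 / c ^ 2) := by
  have hc2 : 0 < c ^ 2 := by nlinarith
  have hx : ‖L ^ 2 / c ^ 2‖ < 1 := by
    rw [Real.norm_of_nonneg (by positivity), div_lt_one hc2]
    nlinarith
  have hn (n : ℕ) : (0 : ℝ) ≤ n := n.cast_nonneg
  have hb (n : ℕ) : (a + 1) / 2 + n ≠ 0 := by linarith [hn n]
  set f : ℕ → ℝ → ℝ := fun n y ↦
    (c ^ 2) ^ (-μ) * ordinaryHypergeometricCoefficient μ 1 1 n / (c ^ 2) ^ n * y ^ (a + 2 * n)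
  have hf_nonneg (n : ℕ) {y : ℝ} (hy : 0 < y) : 0 ≤ f n y := by
    have hpos := ascPochhammer_pos n μ hμ
    simp only [f, ordinaryHypergeometricCoefficient_one_one]
    positivity
  have hr (n : ℕ) : -1 < a + 2 * n := by linarith [hn n]
  have hf_int (n : ℕ) : IntegrableOn (f n) (Ioo 0 L) :=
    (integrableOn_Ioo_rpow (hr n) hL.le).const_mul _
  have hf_integral (n : ℕ) : ∫ y in Ioo 0 L, f n y = L ^ (a + 1) / ((a + 1) * (c ^ 2) ^ μ) *
      (ordinaryHypergeometricCoefficient μ ((a + 1) / 2) ((a + 3) / 2) n * (L ^ 2 / c ^ 2) ^ n) := by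
    rw [integral_const_mul, integral_Ioo_rpow_s8 (hr n) hL.le,
      show (a + 3) / 2 = (a + 1) / 2 + 1 by ring, ordinaryHypergeometricCoefficient_self_add_one _ hb,
      add_right_comm, rpow_add_two_mul_natCast hL, Real.rpow_neg hc2.le, div_pow]
    have ha1 : a + 1 ≠ 0 := by linarith
    have han : a + 1 + 2 * n ≠ 0 := by linarith [hn n]
    generalize ordinaryHypergeometricCoefficient μ 1 1 n = C
    field_simp
  have hf_norm (n : ℕ) : ∫ y in Ioo 0 L, ‖f n y‖ = ∫ y in Ioo 0 L, f n y :=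
    setIntegral_congr_fun measurableSet_Ioo fun y hy ↦ Real.norm_of_nonneg (hf_nonneg n hy.1)
  have hsum := hasSum_integral_of_summable_integral_norm hf_int (by
    simp_rw [hf_norm, hf_integral]
    exact ((summable_norm_ordinaryHypergeometric _ _ _ hx).of_norm).mul_left _)
  simp_rw [hf_integral] at hsum
  calc _ = ∫ y in Ioo 0 L, ∑' n, f n y :=
        setIntegral_congr_fun measurableSet_Ioo fun y hy ↦
          ((hasSum_rpow_mul_sq_sub_sq_rpow_neg a μ hy.1 (hy.2.trans hLc)).tsum_eq).symm
    _ = _ := hsum.unique ((hasSum_ordinaryHypergeometric _ _ _ hx).mul_left _)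

@[norm_cast]
theorem GaussF_ofReal (a b c x : ℝ) : GaussF a b c x = ₂F₁ a b c x := by
  have hcast (s : ℝ) (n : ℕ) :
      (ascPochhammer ℂ n).eval (s : ℂ) = (ascPochhammer ℝ n).eval s := by
    rw [← ascPochhammer_map Complex.ofRealHom, eval_map]
    exact eval₂_at_apply Complex.ofRealHom s
  rw [GaussF, ordinaryHypergeometric_eq_tsum, Complex.ofReal_tsum]
  congr 1 with n
  simp only [hcast, smul_eq_mul]
  push_cast
  ring

theorem four_mul_ordinaryHypergeometric_three_halves {a z : ℝ} (ha : -3 < a) (hz : 0 < z) :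
    4 * z * ₂F₁ (3 / 2) ((a + 1) / 2) ((a + 3) / 2) ((z - 1) ^ 2 / (z + 1) ^ 2) =
      (a + 2) * (z + 1) ^ 2 * ₂F₁ (-(1 / 2)) ((a + 1) / 2) ((a + 3) / 2) ((z - 1) ^ 2 / (z + 1) ^ 2)
        - (z * (4 * a + z + 2) + 1) *
          ₂F₁ (1 / 2) ((a + 1) / 2) ((a + 3) / 2) ((z - 1) ^ 2 / (z + 1) ^ 2) := by
  set x := (z - 1) ^ 2 / (z + 1) ^ 2
  have hx : ‖x‖ < 1 := by
    rw [Real.norm_of_nonneg (by positivity), div_lt_one (by positivity)]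
    nlinarith
  have hc (n : ℕ) : (a + 3) / 2 + n ≠ 0 := by linarith [n.cast_nonneg (α := ℝ)]
  have hrel := ordinaryHypergeometric_contiguous (1 / 2) ((a + 1) / 2) _ hc hx
  rw [show (1 / 2 : ℝ) - 1 = -(1 / 2) by norm_num, show (1 / 2 : ℝ) + 1 = 3 / 2 by norm_num] at hrel
  have hxc : x * (z + 1) ^ 2 = (z - 1) ^ 2 := div_mul_cancel₀ _ (by positivity)
  linear_combination -2 * (z + 1) ^ 2 * hrel + (a * ₂F₁ (1 / 2) ((a + 1) / 2) ((a + 3) / 2) x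
    + ₂F₁ (3 / 2) ((a + 1) / 2) ((a + 3) / 2) x) * hxc

theorem stmt8 (a : ℝ) (ha : a > -1) (z : ℝ) (hz : 1 < z) :
    Complex.ofReal (∫ y in Set.Ioo (0:ℝ) (z - 1),
        y ^ a * ((z + 1) ^ 2 - y ^ 2) ^ (-(3/2) : ℝ))
      = (((z - 1) ^ (a + 1) / (4 * (a + 1) * z * (z + 1) ^ 3) : ℝ) : ℂ) *
          (((a : ℂ) + 2) * ((z : ℂ) + 1) ^ 2 *
              GaussF (-(1/2)) (((a : ℂ) + 1) / 2) (((a : ℂ) + 3) / 2)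
                (((z - 1) ^ 2 / (z + 1) ^ 2 : ℝ) : ℂ)
            - (((z * (4*a + z + 2) + 1 : ℝ)) : ℂ) *
              GaussF (1/2) (((a : ℂ) + 1) / 2) (((a : ℂ) + 3) / 2)
                (((z - 1) ^ 2 / (z + 1) ^ 2 : ℝ) : ℂ)) := by
  have hcube : ((z + 1) ^ 2) ^ (3 / 2 : ℝ) = (z + 1) ^ 3 := by
    rw [← Real.rpow_natCast, ← Real.rpow_natCast, ← Real.rpow_mul (by linarith)]
    norm_num
  rw [integral_rpow_mul_sq_sub_sq_rpow_neg ha (by norm_num) (by linarith) (by linarith), hcube,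
    show (-(1 / 2) : ℂ) = (-(1 / 2) : ℝ) by push_cast; rfl,
    show (1 / 2 : ℂ) = (1 / 2 : ℝ) by push_cast; rfl]
  norm_cast
  rw [← four_mul_ordinaryHypergeometric_three_halves (by linarith) (by linarith)]
  field_simp
end

section
/- Let a > −1 be real and M ∈ ℂ with Re M ≥ 3/2 and M ≠ 3/2. Then there exists a constant C > 0, depending only on a and M, such that for all reals t > b > 0: | ∫₀^{e^{−b} − e^{−t}} r^a ((e^{−t} + e^{−b})² − r²)^{−5/2 + M} dr | ≤ C (1 + (t−b)^κ) e^{−(a + 2 Re M − 4)(b+t)} (e^t − e^b)^{1+a} (e^b + e^t)^{2 Re M − 5}, where κ = 1 if Re M = 3/2 and κ = 0 otherwise. -/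
/-!
Put `u = e^{-b} - e^{-t} < s = e^{-t} + e^{-b}` and `α = Re M - 5/2 ≥ -1`. Since
`u = e^{-(b+t)} (e^t - e^b)` and `s = e^{-(b+t)} (e^b + e^t)`, it suffices to bound
`∫₀ᵘ r^a (s² - r²)^α dr` by a multiple of `u^{1+a} s^{2α}`, with an extra factor
`log (s / (s - u)) ≤ t - b` when `α = -1`. For `α ≥ 0` use `(s² - r²)^α ≤ s^{2α}`. For `α < 0`
write `(s² - r²)^α = (s - r)^α (s + r)^α` with `(s + r)^α ≤ s^α`; then `(s - r)^α ≲ s^α` for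
`r ≤ s/2`, while for `r > s/2 > u/2` we have `r^a ≲ u^a`, and `∫₀ᵘ (s - r)^α dr ≲ u s^α` by
concavity of `x ↦ x^{α+1}` (or, for `α = -1`, by `log (1 + x) ≤ x` when `u ≤ s/2`).
-/

open MeasureTheory Set Real

lemma setIntegral_mono_on_of_nonneg {X : Type*} [MeasurableSpace X] {μ : Measure X}
    {f g : X → ℝ} {S : Set X} (hS : MeasurableSet S) (hg : IntegrableOn g S μ)
    (hf : ∀ x ∈ S, 0 ≤ f x) (hfg : ∀ x ∈ S, f x ≤ g x) :
    ∫ x in S, f x ∂μ ≤ ∫ x in S, g x ∂μ :=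
  integral_mono_of_nonneg (ae_restrict_of_forall_mem hS hf) hg (ae_restrict_of_forall_mem hS hfg)

section

variable {a α r u s : ℝ}

lemma setIntegral_Ioo_rpow (ha : -1 < a) (hu : 0 ≤ u) :
    ∫ r in Ioo 0 u, r ^ a = u ^ (a + 1) / (a + 1) := by
  rw [← integral_Ioc_eq_integral_Ioo, ← intervalIntegral.integral_of_le hu,
    integral_rpow (Or.inl ha), zero_rpow (by linarith), sub_zero]

lemma integrableOn_Ioo_rpow_s11 (ha : -1 < a) (u : ℝ) : IntegrableOn (fun r : ℝ ↦ r ^ a) (Ioo 0 u) :=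
  (intervalIntegral.intervalIntegrable_rpow' ha).1.mono_set Ioo_subset_Ioc_self

lemma setIntegral_Ioo_sub_rpow (hα : -1 < α) (hu : 0 ≤ u) :
    ∫ r in Ioo 0 u, (s - r) ^ α = (s ^ (α + 1) - (s - u) ^ (α + 1)) / (α + 1) := by
  rw [← integral_Ioc_eq_integral_Ioo, ← intervalIntegral.integral_of_le hu,
    intervalIntegral.integral_comp_sub_left (fun x ↦ x ^ α), sub_zero,
    integral_rpow (Or.inl hα)]

lemma setIntegral_Ioo_sub_inv (hu : 0 ≤ u) (hus : u < s) :
    ∫ r in Ioo 0 u, (s - r)⁻¹ = log (s / (s - u)) := by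
  rw [← integral_Ioc_eq_integral_Ioo, ← intervalIntegral.integral_of_le hu,
    intervalIntegral.integral_comp_sub_left (fun x ↦ x⁻¹), sub_zero,
    integral_inv_of_pos (by linarith) (by linarith)]

lemma rpow_add_one_sub_sub_rpow_add_one_le (hα : -1 ≤ α) (hα0 : α ≤ 0) (hu : 0 ≤ u)
    (hus : u < s) : s ^ (α + 1) - (s - u) ^ (α + 1) ≤ u * s ^ α := by
  have hs : 0 < s := hu.trans_lt hus
  have key : (s - u) * s ^ α ≤ (s - u) ^ (α + 1) :=
    calc (s - u) * s ^ α = ((s - u) / s) ^ (1 : ℝ) * s ^ (α + 1) := by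
          rw [rpow_one, rpow_add_one hs.ne']; field_simp
      _ ≤ ((s - u) / s) ^ (α + 1) * s ^ (α + 1) := by
          refine mul_le_mul_of_nonneg_right ?_ (by positivity)
          exact rpow_le_rpow_of_exponent_ge' (div_nonneg (by linarith) hs.le)
            ((div_le_one hs).2 (by linarith)) (by linarith) (by linarith)
      _ = (s - u) ^ (α + 1) := by
          rw [div_rpow (by linarith) hs.le, div_mul_cancel₀ _ (by positivity)]
  linarith [rpow_add_one hs.ne' α]

lemma log_div_sub_mul_le (hu : 0 < u) (hus : u < s) {D : ℝ} (hD : 1 ≤ D)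
    (hL : log (s / (s - u)) ≤ D) : log (s / (s - u)) * s ≤ 2 * D * u := by
  have hL0 : 0 ≤ log (s / (s - u)) := log_nonneg ((one_le_div (by linarith)).2 (by linarith))
  rcases le_or_gt s (2 * u) with hsu | hsu
  · nlinarith
  · have hlog := log_le_sub_one_of_pos (div_pos (hu.trans hus) (by linarith : 0 < s - u))
    rw [div_sub_one (by linarith), le_div_iff₀ (by linarith)] at hlog
    nlinarith

lemma exists_setIntegral_Ioo_sub_rpow_le (hα : -1 ≤ α) (hα0 : α ≤ 0) :
    ∃ c > 0, ∀ u s D : ℝ, 0 < u → u < s → 1 ≤ D → (α = -1 → log (s / (s - u)) ≤ D) →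
      ∫ r in Ioo 0 u, (s - r) ^ α ≤ c * D * u * s ^ α := by
  rcases hα.eq_or_lt with rfl | hα
  · refine ⟨2, two_pos, fun u s D hu hus hD hL ↦ ?_⟩
    calc ∫ r in Ioo 0 u, (s - r) ^ (-1 : ℝ) = log (s / (s - u)) := by
          simp only [rpow_neg_one]; exact setIntegral_Ioo_sub_inv hu.le hus
      _ ≤ 2 * D * u * s ^ (-1 : ℝ) := by
          rw [rpow_neg_one, ← div_eq_mul_inv, le_div_iff₀ (hu.trans hus)]
          exact log_div_sub_mul_le hu hus hD (hL rfl)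
  · have hα1 : 0 < α + 1 := by linarith
    refine ⟨1 / (α + 1), by positivity, fun u s D hu hus hD _ ↦ ?_⟩
    have hs : 0 < s := hu.trans hus
    calc ∫ r in Ioo 0 u, (s - r) ^ α = (s ^ (α + 1) - (s - u) ^ (α + 1)) / (α + 1) :=
          setIntegral_Ioo_sub_rpow hα hu.le
      _ ≤ u * s ^ α / (α + 1) := by
          gcongr; exact rpow_add_one_sub_sub_rpow_add_one_le hα.le hα0 hu.le hus
      _ ≤ D * (u * s ^ α) / (α + 1) :=
          div_le_div_of_nonneg_right
            (le_mul_of_one_le_left (mul_nonneg hu.le (rpow_nonneg hs.le _)) hD) hα1.le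
      _ = 1 / (α + 1) * D * u * s ^ α := by ring

lemma rpow_le_two_rpow_abs_mul_rpow_s11 (hr : u / 2 ≤ r) (hru : r ≤ u) (hu : 0 < u) :
    r ^ a ≤ 2 ^ |a| * u ^ a := by
  rcases le_or_gt 0 a with ha | ha
  · calc r ^ a ≤ u ^ a := rpow_le_rpow (by linarith) hru ha
      _ ≤ 2 ^ |a| * u ^ a :=
          le_mul_of_one_le_left (by positivity) (one_le_rpow one_le_two (abs_nonneg a))
  · calc r ^ a ≤ (u / 2) ^ a := rpow_le_rpow_of_nonpos (by positivity) hr ha.le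
      _ = 2 ^ |a| * u ^ a := by
          rw [abs_of_neg ha, div_rpow hu.le zero_le_two, rpow_neg zero_le_two, div_eq_inv_mul]

lemma rpow_mul_sub_rpow_le (hα : α ≤ 0) (hr : 0 < r) (hru : r ≤ u) (hus : u < s) :
    r ^ a * (s - r) ^ α ≤ 2 ^ (-α) * s ^ α * r ^ a + 2 ^ |a| * u ^ a * (s - r) ^ α := by
  have hs : 0 < s := hr.trans_le hru |>.trans hus
  have hsr : 0 < s - r := by linarith
  rcases le_or_gt r (s / 2) with hrs | hrs
  · have hfar : (s - r) ^ α ≤ 2 ^ (-α) * s ^ α :=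
      calc (s - r) ^ α ≤ (s / 2) ^ α := rpow_le_rpow_of_nonpos (by positivity) (by linarith) hα
        _ = 2 ^ (-α) * s ^ α := by
          rw [div_rpow hs.le zero_le_two, rpow_neg zero_le_two, div_eq_inv_mul]
    have := mul_le_mul_of_nonneg_left hfar (rpow_nonneg hr.le a)
    have : 0 ≤ 2 ^ |a| * u ^ a * (s - r) ^ α :=
      mul_nonneg (mul_nonneg (by positivity) (rpow_nonneg (hr.le.trans hru) a))
        (rpow_nonneg hsr.le α)
    linarith
  · have hnear := rpow_le_two_rpow_abs_mul_rpow_s11 (a := a) (by linarith) hru (hr.trans_le hru)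
    have := mul_le_mul_of_nonneg_right hnear (rpow_nonneg hsr.le α)
    have : 0 ≤ 2 ^ (-α) * s ^ α * r ^ a := by positivity
    linarith

lemma rpow_mul_sq_sub_sq_rpow_nonneg (hr : r ∈ Ioo 0 u) (hus : u < s) :
    0 ≤ r ^ a * (s ^ 2 - r ^ 2) ^ α :=
  mul_nonneg (rpow_nonneg hr.1.le a) (rpow_nonneg (by nlinarith [hr.1, hr.2]) α)

lemma setIntegral_rpow_mul_sq_sub_sq_rpow_le_of_nonneg (ha : -1 < a) (hα : 0 ≤ α) (hu : 0 < u)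
    (hus : u < s) :
    ∫ r in Ioo 0 u, r ^ a * (s ^ 2 - r ^ 2) ^ α ≤ u ^ (1 + a) / (1 + a) * s ^ (2 * α) := by
  have hs : 0 < s := hu.trans hus
  calc ∫ r in Ioo 0 u, r ^ a * (s ^ 2 - r ^ 2) ^ α ≤ ∫ r in Ioo 0 u, r ^ a * s ^ (2 * α) := by
        refine setIntegral_mono_on_of_nonneg measurableSet_Ioo
          ((integrableOn_Ioo_rpow_s11 ha u).mul_const _)
          (fun r hr ↦ rpow_mul_sq_sub_sq_rpow_nonneg hr hus) fun r hr ↦ ?_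
        rw [rpow_mul hs.le, rpow_two]
        exact mul_le_mul_of_nonneg_left
          (rpow_le_rpow (by nlinarith [hr.1, hr.2]) (by nlinarith [hr.1]) hα) (rpow_nonneg hr.1.le a)
    _ = u ^ (1 + a) / (1 + a) * s ^ (2 * α) := by
        rw [integral_mul_const, setIntegral_Ioo_rpow ha hu.le, add_comm a 1]

lemma exists_setIntegral_rpow_mul_sq_sub_sq_rpow_le_of_nonpos (ha : -1 < a) (hα : -1 ≤ α)
    (hα0 : α ≤ 0) :
    ∃ C > 0, ∀ u s D : ℝ, 0 < u → u < s → 1 ≤ D → (α = -1 → log (s / (s - u)) ≤ D) →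
      ∫ r in Ioo 0 u, r ^ a * (s ^ 2 - r ^ 2) ^ α ≤ C * D * u ^ (1 + a) * s ^ (2 * α) := by
  obtain ⟨c, hc, hJ⟩ := exists_setIntegral_Ioo_sub_rpow_le hα hα0
  have ha1 : 0 < 1 + a := by linarith
  refine ⟨2 ^ (-α) / (1 + a) + 2 ^ |a| * c, by positivity, fun u s D hu hus hD hL ↦ ?_⟩
  have hs : 0 < s := hu.trans hus
  have hpt : ∀ r ∈ Ioo 0 u, r ^ a * (s ^ 2 - r ^ 2) ^ α ≤
      s ^ α * (2 ^ (-α) * s ^ α * r ^ a + 2 ^ |a| * u ^ a * (s - r) ^ α) := fun r hr ↦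
    calc r ^ a * (s ^ 2 - r ^ 2) ^ α = (s + r) ^ α * (r ^ a * (s - r) ^ α) := by
          rw [show s ^ 2 - r ^ 2 = (s - r) * (s + r) by ring,
            mul_rpow (by linarith [hr.2]) (by linarith [hr.1])]
          ring
      _ ≤ s ^ α * (2 ^ (-α) * s ^ α * r ^ a + 2 ^ |a| * u ^ a * (s - r) ^ α) :=
          mul_le_mul (rpow_le_rpow_of_nonpos hs (by linarith [hr.1]) hα0)
            (rpow_mul_sub_rpow_le hα0 hr.1 hr.2.le hus)
            (mul_nonneg (rpow_nonneg hr.1.le a) (rpow_nonneg (by linarith [hr.2]) α))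
            (rpow_nonneg hs.le α)
  have hsub : IntegrableOn (fun r ↦ (s - r) ^ α) (Ioo 0 u) :=
    ((ContinuousOn.rpow_const (by fun_prop) fun r hr ↦ Or.inl (by linarith [hr.2])).integrableOn_Icc
      (μ := volume)).mono_set Ioo_subset_Icc_self
  have hJ' := mul_le_mul_of_nonneg_left (hJ u s D hu hus hD hL)
    (mul_nonneg (by positivity : (0 : ℝ) ≤ 2 ^ |a|) (rpow_nonneg hu.le a))
  calc ∫ r in Ioo 0 u, r ^ a * (s ^ 2 - r ^ 2) ^ α
      ≤ ∫ r in Ioo 0 u, s ^ α * (2 ^ (-α) * s ^ α * r ^ a + 2 ^ |a| * u ^ a * (s - r) ^ α) :=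
        setIntegral_mono_on_of_nonneg measurableSet_Ioo
          ((((integrableOn_Ioo_rpow_s11 ha u).const_mul _).add (hsub.const_mul _)).const_mul _)
          (fun r hr ↦ rpow_mul_sq_sub_sq_rpow_nonneg hr hus) hpt
    _ = s ^ α * (2 ^ (-α) * s ^ α * (u ^ (1 + a) / (1 + a))
          + 2 ^ |a| * u ^ a * ∫ r in Ioo 0 u, (s - r) ^ α) := by
        rw [integral_const_mul, integral_add (((integrableOn_Ioo_rpow_s11 ha u).const_mul _))
          (hsub.const_mul _), integral_const_mul, integral_const_mul,
          setIntegral_Ioo_rpow ha hu.le, add_comm a 1]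
    _ ≤ s ^ α * (2 ^ (-α) * s ^ α * (u ^ (1 + a) / (1 + a))
          + 2 ^ |a| * u ^ a * (c * D * u * s ^ α)) := by
        gcongr
    _ = (2 ^ (-α) / (1 + a) + 2 ^ |a| * c * D) * u ^ (1 + a) * s ^ (2 * α) := by
        rw [rpow_add hu, rpow_one, two_mul, rpow_add hs]
        ring
    _ ≤ (2 ^ (-α) / (1 + a) + 2 ^ |a| * c) * D * u ^ (1 + a) * s ^ (2 * α) := by
        gcongr
        nlinarith [show 0 ≤ 2 ^ (-α) / (1 + a) by positivity]

-- `D` absorbs the logarithmic loss at the critical exponent `α = -1`.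
theorem exists_setIntegral_rpow_mul_sq_sub_sq_rpow_le (ha : -1 < a) (hα : -1 ≤ α) :
    ∃ C > 0, ∀ u s D : ℝ, 0 < u → u < s → 1 ≤ D → (α = -1 → log (s / (s - u)) ≤ D) →
      ∫ r in Ioo 0 u, r ^ a * (s ^ 2 - r ^ 2) ^ α ≤ C * D * u ^ (1 + a) * s ^ (2 * α) := by
  rcases le_or_gt 0 α with hα0 | hα0
  · have ha1 : 0 < 1 + a := by linarith
    refine ⟨1 / (1 + a), by positivity, fun u s D hu hus hD _ ↦ ?_⟩
    calc ∫ r in Ioo 0 u, r ^ a * (s ^ 2 - r ^ 2) ^ α ≤ u ^ (1 + a) / (1 + a) * s ^ (2 * α) :=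
          setIntegral_rpow_mul_sq_sub_sq_rpow_le_of_nonneg ha hα0 hu hus
      _ = 1 / (1 + a) * (u ^ (1 + a) * s ^ (2 * α)) := by ring
      _ ≤ 1 / (1 + a) * D * (u ^ (1 + a) * s ^ (2 * α)) :=
          mul_le_mul_of_nonneg_right (le_mul_of_one_le_right (by positivity) hD)
            (mul_nonneg (rpow_nonneg hu.le _) (rpow_nonneg (hu.trans hus).le _))
      _ = 1 / (1 + a) * D * u ^ (1 + a) * s ^ (2 * α) := by ring
  · exact exists_setIntegral_rpow_mul_sq_sub_sq_rpow_le_of_nonpos ha hα hα0.le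

end

lemma norm_setIntegral_ofReal_mul_cpow_le {X : Type*} [MeasurableSpace X] {μ : Measure X}
    {S : Set X} (hS : MeasurableSet S) {f g : X → ℝ} (hf : ∀ x ∈ S, 0 ≤ f x)
    (hg : ∀ x ∈ S, 0 < g x) (w : ℂ) :
    ‖∫ x in S, (f x : ℂ) * (g x : ℂ) ^ w ∂μ‖ ≤ ∫ x in S, f x * g x ^ w.re ∂μ := by
  refine (norm_integral_le_integral_norm _).trans_eq (setIntegral_congr_fun hS fun x hx ↦ ?_)
  rw [norm_mul, Complex.norm_real, Real.norm_of_nonneg (hf x hx),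
    Complex.norm_cpow_eq_rpow_re_of_pos (hg x hx)]

lemma exp_neg_sub_exp_neg_rpow_mul_exp_neg_add_exp_neg_rpow {b t : ℝ} (hbt : b ≤ t) (p q : ℝ) :
    (exp (-b) - exp (-t)) ^ p * (exp (-t) + exp (-b)) ^ q
      = exp (-(p + q) * (b + t)) * (exp t - exp b) ^ p * (exp b + exp t) ^ q := by
  have hu : exp (-b) - exp (-t) = exp (-(b + t)) * (exp t - exp b) := by
    rw [mul_sub, ← exp_add, ← exp_add]; ring_nf
  have hs : exp (-t) + exp (-b) = exp (-(b + t)) * (exp b + exp t) := by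
    rw [mul_add, ← exp_add, ← exp_add]; ring_nf
  have hbt' : exp b ≤ exp t := exp_le_exp.2 hbt
  rw [hu, hs, mul_rpow (exp_pos _).le (by linarith), mul_rpow (exp_pos _).le (by positivity),
    show -(p + q) * (b + t) = -(b + t) * p + -(b + t) * q by ring, exp_add, exp_mul, exp_mul]
  ring

lemma log_exp_neg_add_exp_neg_div_le {b t : ℝ} (hbt : b ≤ t) :
    log ((exp (-t) + exp (-b)) / (2 * exp (-t))) ≤ t - b := by
  rw [← log_exp (t - b)]
  refine log_le_log (by positivity) ((div_le_iff₀ (by positivity)).2 ?_)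
  have : exp (-b) = exp (t - b) * exp (-t) := by rw [← exp_add]; ring_nf
  have : exp (-t) ≤ exp (-b) := exp_le_exp.2 (by linarith)
  nlinarith [exp_pos (-t)]

theorem stmt11_general (a : ℝ) (ha : a > -1) (M : ℂ) (hM : 3/2 ≤ M.re) :
    ∃ C > 0, ∀ b t : ℝ, 0 < b → b < t →
      ‖(∫ r in Set.Ioo (0:ℝ) (Real.exp (-b) - Real.exp (-t)),
          ((r ^ a : ℝ) : ℂ) *
            (((Real.exp (-t) + Real.exp (-b)) ^ 2 - r ^ 2 : ℝ) : ℂ) ^ (-(5/2 : ℂ) + M))‖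
        ≤ C * (1 + (t - b) ^ (if M.re = 3/2 then (1:ℝ) else 0)) *
            Real.exp (-(a + 2 * M.re - 4) * (b + t)) *
            (Real.exp t - Real.exp b) ^ (1 + a) *
            (Real.exp b + Real.exp t) ^ (2 * M.re - 5) := by
  obtain ⟨C, hC, hI⟩ := exists_setIntegral_rpow_mul_sq_sub_sq_rpow_le (α := M.re - 5 / 2) ha
    (by linarith)
  refine ⟨C, hC, fun b t _ hbt ↦ ?_⟩
  set u := exp (-b) - exp (-t) with hu_def
  set s := exp (-t) + exp (-b) with hs_def
  set D := 1 + (t - b) ^ (if M.re = 3 / 2 then (1 : ℝ) else 0)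
  have hexp : exp (-t) < exp (-b) := exp_lt_exp.2 (by linarith)
  have hu : 0 < u := sub_pos.2 hexp
  have hus : u < s := by linarith [exp_pos (-t)]
  have hD : 1 ≤ D := le_add_of_nonneg_right (rpow_nonneg (by linarith) _)
  have hL : M.re - 5 / 2 = -1 → log (s / (s - u)) ≤ D := fun hα ↦ by
    have hM : M.re = 3 / 2 := by linarith
    rw [show s - u = 2 * exp (-t) by ring]
    simp only [D, hM, if_true, rpow_one]
    linarith [log_exp_neg_add_exp_neg_div_le hbt.le]
  have hre : (-(5 / 2 : ℂ) + M).re = M.re - 5 / 2 := by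
    simp only [Complex.add_re, Complex.neg_re, Complex.div_ofNat_re, Complex.re_ofNat]; ring
  calc _ ≤ ∫ r in Ioo 0 u, r ^ a * (s ^ 2 - r ^ 2) ^ (M.re - 5 / 2) := by
        rw [← hre]
        exact norm_setIntegral_ofReal_mul_cpow_le measurableSet_Ioo
          (fun r hr ↦ rpow_nonneg hr.1.le a) (fun r hr ↦ by nlinarith [hr.1, hr.2]) _
    _ ≤ C * D * u ^ (1 + a) * s ^ (2 * (M.re - 5 / 2)) := hI u s D hu hus hD hL
    _ = _ := by
        rw [mul_assoc (C * D), hu_def, hs_def,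
          exp_neg_sub_exp_neg_rpow_mul_exp_neg_add_exp_neg_rpow hbt.le]
        ring_nf

theorem stmt11 (a : ℝ) (ha : a > -1) (M : ℂ) (hM : 3/2 ≤ M.re) (hM' : M ≠ 3/2) :
    ∃ C > 0, ∀ b t : ℝ, 0 < b → b < t →
      ‖(∫ r in Set.Ioo (0:ℝ) (Real.exp (-b) - Real.exp (-t)),
          ((r ^ a : ℝ) : ℂ) *
            (((Real.exp (-t) + Real.exp (-b)) ^ 2 - r ^ 2 : ℝ) : ℂ) ^ (-(5/2 : ℂ) + M))‖
        ≤ C * (1 + (t - b) ^ (if M.re = 3/2 then (1:ℝ) else 0)) *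
            Real.exp (-(a + 2 * M.re - 4) * (b + t)) *
            (Real.exp t - Real.exp b) ^ (1 + a) *
            (Real.exp b + Real.exp t) ^ (2 * M.re - 5) :=
  stmt11_general a ha M hM
end
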